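/- arXiv:2508.09706 — 9 statements merged into one kernel-verified Lean document; each statement's English description precedes it below -/
import Mathlib

section
/- Let G be a finite non-nilpotent group all of whose proper subgroups are abelian. Then G = P ⋊ Q where Q is a cyclic Sylow q-subgroup, P is a Sylow p-subgroup which is elementary abelian and equals the commutator subgroup G', for distinct primes p and q. -/
/-!
A non-normal Sylow `q`-subgroup `Q` exists because `G` is not nilpotent; its normalizer is proper,
hence abelian, so Burnside's transfer theorem gives a normal complement `K`, which is abelian.
Since `G` is not abelian, `K⟨x⟩ = G` for some `x ∈ Q`, and then `Q = ⟨x⟩`.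

For a normal subgroup `A ≤ K` either `A⟨x⟩ = G`, forcing `A = K`, or `A⟨x⟩` is proper, hence
abelian, and `x` centralizes `A`. If `x` commutes with `[x, k]` for some `k ∈ K`, then
`x^n k x^-n = [x, k]^n k`, so `[x, k]^(ord x) = 1` and `[x, k] = 1` because `ord x` is prime to
`|K|`. Applied to `A = [K, x]`, the image of the homomorphism `k ↦ [x, k]`, this gives `[K, x] = K`,
so `x` has no nontrivial fixed point in `K` and `K` is a minimal normal subgroup of `G`. Hence `K`
equals its `p`-torsion for any prime `p ∣ |K|`, and `K = [K, x] ≤ G' ≤ K` as `G / K` is cyclic.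
-/

open scoped commutatorElement Pointwise

namespace Subgroup

variable {G : Type*} [Group G]

/-- `hAL` holds as soon as `A` or `L` is normal, by `normal_mul` or `mul_normal`. -/
theorem eq_of_le_of_sup_eq_top_of_inf_eq_bot {A B L : Subgroup G} (hAB : A ≤ B)
    (hAL : ((A ⊔ L : Subgroup G) : Set G) = A * L) (hsup : A ⊔ L = ⊤) (hinf : B ⊓ L = ⊥) :
    A = B := by
  refine le_antisymm hAB fun b hb => ?_
  have hb' : b ∈ ((A ⊔ L : Subgroup G) : Set G) := by simp [hsup]
  rw [hAL] at hb'
  obtain ⟨a, ha, l, hl, rfl⟩ := hb'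
  have hlB : l ∈ B := by simpa using B.mul_mem (B.inv_mem (hAB ha)) hb
  have hl1 : l ∈ B ⊓ L := ⟨hlB, hl⟩
  rw [hinf, mem_bot] at hl1
  simpa [hl1] using ha

theorem le_centralizer_of_isMulCommutative_sup {H K : Subgroup G} [IsMulCommutative ↥(H ⊔ K)] :
    K ≤ centralizer H :=
  le_sup_right.trans <| (le_centralizer (H ⊔ K)).trans <|
    centralizer_le (SetLike.coe_subset_coe.mpr le_sup_left)

theorem isMulCommutative_of_sup_eq_top {H K : Subgroup G} [IsMulCommutative H]
    [IsMulCommutative K] (hHK : H ≤ centralizer K) (hsup : H ⊔ K = ⊤) : IsMulCommutative G := by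
  have hcenter : ∀ L : Subgroup G, L ≤ centralizer H → L ≤ centralizer K → L ≤ center G := by
    intro L hLH hLK
    rw [← centralizer_univ, ← coe_top, ← hsup, le_centralizer_iff]
    exact sup_le (le_centralizer_iff.mp hLH) (le_centralizer_iff.mp hLK)
  rw [← center_eq_top_iff, eq_top_iff, ← hsup]
  exact sup_le (hcenter H (le_centralizer H) hHK)
    (hcenter K (le_centralizer_iff.mp hHK) (le_centralizer K))

theorem commutator_le_of_sup_eq_top {N H : Subgroup G} [N.Normal] [IsMulCommutative H]
    (hsup : N ⊔ H = ⊤) : _root_.commutator G ≤ N := by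
  rw [← QuotientGroup.ker_mk' N, ← map_eq_bot_iff, _root_.commutator_def, map_commutator, ← hsup,
    map_sup, QuotientGroup.map_mk'_self, bot_sup_eq, ← map_commutator,
    commutator_eq_bot_iff_le_centralizer.mpr (le_centralizer H), map_bot]

theorem eq_one_of_pow_eq_one_of_coprime {K : Subgroup G} {g : G} {n : ℕ} (hg : g ∈ K)
    (hgn : g ^ n = 1) (hcop : (Nat.card K).Coprime n) : g = 1 :=
  orderOf_eq_one_iff.mp <| Nat.eq_one_of_dvd_coprimes hcop (K.orderOf_dvd_natCard hg)
    (orderOf_dvd_of_pow_eq_one hgn)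

theorem commutatorElement_mem_right {K : Subgroup G} [hK : K.Normal] (x : G) {k : G}
    (hk : k ∈ K) : ⁅x, k⁆ ∈ K :=
  K.mul_mem (hK.conj_mem k hk x) (K.inv_mem hk)

def torsionBy (K : Subgroup G) [IsMulCommutative K] (n : ℕ) : Subgroup G where
  carrier := {g | g ∈ K ∧ g ^ n = 1}
  mul_mem' := fun {a b} ⟨ha, han⟩ ⟨hb, hbn⟩ =>
    ⟨K.mul_mem ha hb, by
      rw [Commute.mul_pow (setLike_mul_comm ha hb), han, hbn, one_mul]⟩
  one_mem' := ⟨K.one_mem, one_pow n⟩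
  inv_mem' := fun {a} ⟨ha, han⟩ => ⟨K.inv_mem ha, by rw [inv_pow, han, inv_one]⟩

theorem torsionBy_le (K : Subgroup G) [IsMulCommutative K] (n : ℕ) : K.torsionBy n ≤ K :=
  fun _ hg => hg.1

instance (K : Subgroup G) [hK : K.Normal] [IsMulCommutative K] (n : ℕ) :
    (K.torsionBy n).Normal :=
  ⟨fun g ⟨hg, hgn⟩ h => ⟨hK.conj_mem g hg h, by rw [conj_pow, hgn, mul_one, mul_inv_cancel]⟩⟩

end Subgroup

open Subgroup

section

variable {G : Type*} [Group G]

theorem conj_pow_eq_commutatorElement_pow_mul {x k : G} (h : Commute x ⁅x, k⁆) (n : ℕ) :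
    x ^ n * k * (x ^ n)⁻¹ = ⁅x, k⁆ ^ n * k := by
  induction n with
  | zero => simp
  | succ n ih =>
    calc x ^ (n + 1) * k * (x ^ (n + 1))⁻¹ = x * (x ^ n * k * (x ^ n)⁻¹) * x⁻¹ := by group
      _ = ⁅x, k⁆ ^ n * (x * k * x⁻¹) := by rw [ih, ← mul_assoc, (h.pow_right n).eq]; group
      _ = ⁅x, k⁆ ^ (n + 1) * k := by
        rw [pow_succ, mul_assoc _ _ k, commutatorElement_def, inv_mul_cancel_right]

theorem commutatorElement_pow_orderOf_eq_one {x k : G} (h : Commute x ⁅x, k⁆) :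
    ⁅x, k⁆ ^ orderOf x = 1 := by
  simpa [pow_orderOf_eq_one] using (conj_pow_eq_commutatorElement_pow_mul h (orderOf x)).symm

end

section CommutatorHom

variable {G : Type*} [Group G] (K : Subgroup G) [K.Normal] [IsMulCommutative K] (x : G)

def commutatorElementHom : K →* G where
  toFun k := ⁅x, (k : G)⁆
  map_one' := commutatorElement_one_right x
  map_mul' k l := by
    have hkl : Commute (k : G) l := setLike_mul_comm k.2 l.2
    have hlk : Commute (k⁻¹ : G) (x * l * x⁻¹) :=
      setLike_mul_comm (K.inv_mem k.2) (‹K.Normal›.conj_mem l l.2 x)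
    simp only [commutatorElement_def, coe_mul]
    rw [mul_inv_rev, ← hkl.inv_inv.eq]
    calc x * (k * l) * x⁻¹ * ((k : G)⁻¹ * (l : G)⁻¹)
        = x * k * x⁻¹ * ((x * l * x⁻¹) * (k : G)⁻¹) * (l : G)⁻¹ := by group
      _ = x * k * x⁻¹ * (k : G)⁻¹ * (x * l * x⁻¹ * (l : G)⁻¹) := by rw [← hlk.eq]; group

theorem commutatorElementHom_apply (k : K) : commutatorElementHom K x k = ⁅x, (k : G)⁆ := rfl

variable {K x}

theorem range_commutatorElementHom_le : (commutatorElementHom K x).range ≤ K := by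
  rintro _ ⟨k, rfl⟩
  exact commutatorElement_mem_right x k.2

theorem range_commutatorElementHom_le_commutator :
    (commutatorElementHom K x).range ≤ commutator G := by
  rintro _ ⟨k, rfl⟩
  exact commutator_def G ▸ commutator_mem_commutator (mem_top x) (mem_top (k : G))

theorem normal_range_commutatorElementHom [Finite G] (hsup : K ⊔ zpowers x = ⊤) :
    (commutatorElementHom K x).range.Normal := by
  rw [← normalizer_eq_top_iff, eq_top_iff, ← hsup, sup_le_iff, zpowers_le]
  constructor
  · refine le_trans ?_ (centralizer_le_normalizer _)
    exact le_centralizer_iff.mp (range_commutatorElementHom_le.trans (le_centralizer K))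
  · refine mem_normalizer_fintype ?_
    rintro _ ⟨k, rfl⟩
    refine ⟨⟨x * k * x⁻¹, ‹K.Normal›.conj_mem k k.2 x⟩, ?_⟩
    simp only [commutatorElementHom_apply, commutatorElement_def]
    group

end CommutatorHom

theorem Sylow.exists_normal_isComplement' {G : Type*} [Group G] [Finite G] {q : ℕ} [Fact q.Prime]
    (Q : Sylow q G) [IsMulCommutative (normalizer (Q : Set G))] :
    ∃ K : Subgroup G, K.Normal ∧ K.IsComplement' Q :=
  ⟨_, MonoidHom.normal_ker _, MonoidHom.ker_transferSylow_isComplement' Q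
    ((le_centralizer _).trans (centralizer_le fun _ => (le_normalizer ·)))⟩

namespace MinimalNonabelian

variable {G : Type*} [Group G]

theorem exists_not_normal_sylow_and_normal_complement [Finite G]
    (hnil : ¬ Group.IsNilpotent G) (hprop : ∀ H : Subgroup G, H < ⊤ → IsMulCommutative H) :
    ∃ (q : ℕ) (_ : Fact q.Prime) (Q : Sylow q G) (K : Subgroup G),
      ¬ (Q : Subgroup G).Normal ∧ K.Normal ∧ K.IsComplement' Q := by
  obtain ⟨q, _, Q, hQ⟩ :
      ∃ (q : ℕ) (_ : Fact q.Prime) (Q : Sylow q G), ¬ (Q : Subgroup G).Normal := by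
    by_contra! h
    exact hnil (((Group.isNilpotent_of_finite_tfae (G := G)).out 0 3).mpr h)
  have := hprop _ (lt_top_iff_ne_top.mpr (normalizer_eq_top_iff.not.mpr hQ))
  obtain ⟨K, hKn, hKQ⟩ := Q.exists_normal_isComplement'
  exact ⟨q, inferInstance, Q, K, hQ, hKn, hKQ⟩

theorem exists_sup_zpowers_eq_top (hprop : ∀ H : Subgroup G, H < ⊤ → IsMulCommutative H)
    (hG : ¬ IsMulCommutative G) {K H : Subgroup G} [IsMulCommutative K] (hsup : K ⊔ H = ⊤)
    (hH : H ≠ ⊤) :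
    ∃ x ∈ H, K ⊔ zpowers x = ⊤ := by
  by_contra! hne
  have hHK : H ≤ centralizer K := fun y hy =>
    have := hprop _ (lt_top_iff_ne_top.mpr (hne y hy))
    zpowers_le.mp le_centralizer_of_isMulCommutative_sup
  have := hprop H (lt_top_iff_ne_top.mpr hH)
  exact hG (isMulCommutative_of_sup_eq_top (le_centralizer_iff.mp hHK) hsup)

variable {K : Subgroup G} {x : G}

theorem le_or_mem_centralizer_of_normal (hprop : ∀ H : Subgroup G, H < ⊤ → IsMulCommutative H)
    (hinf : K ⊓ zpowers x = ⊥) {A : Subgroup G} [A.Normal] (hAK : A ≤ K) :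
    K ≤ A ∨ x ∈ centralizer A := by
  by_cases hA : A ⊔ zpowers x = ⊤
  · exact Or.inl (eq_of_le_of_sup_eq_top_of_inf_eq_bot hAK (normal_mul A _) hA hinf).ge
  · have := hprop _ (lt_top_iff_ne_top.mpr hA)
    exact Or.inr (zpowers_le.mp le_centralizer_of_isMulCommutative_sup)

theorem inf_zpowers_eq_bot_of_coprime (hcop : (Nat.card K).Coprime (orderOf x)) :
    K ⊓ zpowers x = ⊥ :=
  (disjoint_of_coprime_natCard (by rwa [Nat.card_zpowers])).eq_bot

variable [K.Normal]

theorem commutatorElement_eq_one_of_commute (hcop : (Nat.card K).Coprime (orderOf x)) {k : G}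
    (hk : k ∈ K) (h : Commute x ⁅x, k⁆) : ⁅x, k⁆ = 1 :=
  eq_one_of_pow_eq_one_of_coprime (commutatorElement_mem_right x hk)
    (commutatorElement_pow_orderOf_eq_one h) hcop

variable [Finite G] [IsMulCommutative K]

theorem le_range_commutatorElementHom (hprop : ∀ H : Subgroup G, H < ⊤ → IsMulCommutative H)
    (hG : ¬ IsMulCommutative G) (hsup : K ⊔ zpowers x = ⊤)
    (hcop : (Nat.card K).Coprime (orderOf x)) : K ≤ (commutatorElementHom K x).range := by
  have := normal_range_commutatorElementHom hsup
  refine (le_or_mem_centralizer_of_normal hprop (inf_zpowers_eq_bot_of_coprime hcop)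
    range_commutatorElementHom_le).resolve_right
    fun hx => hG (isMulCommutative_of_sup_eq_top (le_centralizer_iff.mp ?_) hsup)
  refine zpowers_le.mpr fun k hk => (commutatorElement_eq_one_iff_commute.mp ?_).symm
  exact commutatorElement_eq_one_of_commute hcop hk
    (mem_centralizer_iff.mp hx _ ⟨⟨k, hk⟩, rfl⟩).symm

theorem eq_one_of_commute (hprop : ∀ H : Subgroup G, H < ⊤ → IsMulCommutative H)
    (hG : ¬ IsMulCommutative G) (hsup : K ⊔ zpowers x = ⊤)
    (hcop : (Nat.card K).Coprime (orderOf x)) {k : G} (hk : k ∈ K) (h : Commute x k) : k = 1 := by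
  obtain ⟨⟨m, hm⟩, rfl⟩ := le_range_commutatorElementHom hprop hG hsup hcop hk
  exact commutatorElement_eq_one_of_commute hcop hm h

theorem eq_bot_or_eq_of_normal_of_le (hprop : ∀ H : Subgroup G, H < ⊤ → IsMulCommutative H)
    (hG : ¬ IsMulCommutative G) (hsup : K ⊔ zpowers x = ⊤)
    (hcop : (Nat.card K).Coprime (orderOf x)) {A : Subgroup G} [A.Normal] (hAK : A ≤ K) :
    A = ⊥ ∨ A = K := by
  refine (le_or_mem_centralizer_of_normal hprop (inf_zpowers_eq_bot_of_coprime hcop) hAK).symm.imp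
    (fun hx => ?_) fun hKA => ?_
  · refine eq_bot_iff.mpr fun a ha => mem_bot.mpr ?_
    exact eq_one_of_commute hprop hG hsup hcop (hAK ha) (mem_centralizer_iff.mp hx a ha).symm
  · exact le_antisymm hAK hKA

theorem pow_eq_one_of_mem (hprop : ∀ H : Subgroup G, H < ⊤ → IsMulCommutative H)
    (hG : ¬ IsMulCommutative G) (hsup : K ⊔ zpowers x = ⊤)
    (hcop : (Nat.card K).Coprime (orderOf x)) {p : ℕ} [Fact p.Prime] (hp : p ∣ Nat.card K) :
    ∀ k ∈ K, k ^ p = 1 := by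
  obtain ⟨g, hg⟩ := exists_prime_orderOf_dvd_card' p hp
  have hgp : (g : G) ∈ K.torsionBy p := ⟨g.2, by rw [← SubmonoidClass.coe_pow, ← hg,
    pow_orderOf_eq_one, OneMemClass.coe_one]⟩
  have htorsion : K.torsionBy p = K := by
    refine (eq_bot_or_eq_of_normal_of_le hprop hG hsup hcop (K.torsionBy_le p)).resolve_left
      fun hbot => (Fact.out : p.Prime).ne_one ?_
    rw [← hg, orderOf_eq_one_iff, ← Subtype.coe_inj, OneMemClass.coe_one, ← mem_bot, ← hbot]
    exact hgp
  exact fun k hk => (htorsion.ge hk).2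

theorem eq_commutator (hprop : ∀ H : Subgroup G, H < ⊤ → IsMulCommutative H)
    (hG : ¬ IsMulCommutative G) (hsup : K ⊔ zpowers x = ⊤)
    (hcop : (Nat.card K).Coprime (orderOf x)) : K = commutator G :=
  le_antisymm ((le_range_commutatorElementHom hprop hG hsup hcop).trans
    range_commutatorElementHom_le_commutator) (commutator_le_of_sup_eq_top hsup)

end MinimalNonabelian

open MinimalNonabelian

/-- Miller–Moreno theorem, non-nilpotent case: a finite non-nilpotent group all of whose
proper subgroups are abelian is `P ⋊ Q` with `Q` a cyclic Sylow `q`-subgroup and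
`P = G'` an elementary abelian Sylow `p`-subgroup, `p ≠ q`. -/
theorem stmt0 {G : Type*} [Group G] [Finite G]
    (hnil : ¬ Group.IsNilpotent G)
    (hprop : ∀ H : Subgroup G, H < ⊤ → IsMulCommutative H) :
    ∃ (p q : ℕ), p.Prime ∧ q.Prime ∧ p ≠ q ∧
      ∃ (P : Sylow p G) (Q : Sylow q G),
        (P : Subgroup G).Normal ∧ IsCyclic ↥(Q : Subgroup G) ∧
        (P : Subgroup G) = commutator G ∧
        IsMulCommutative (P : Subgroup G) ∧ (∀ x ∈ (P : Subgroup G), x ^ p = 1) ∧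
        (P : Subgroup G) ⊓ (Q : Subgroup G) = ⊥ ∧
        (P : Subgroup G) ⊔ (Q : Subgroup G) = ⊤ := by
  obtain ⟨q, _, Q, K, hQ, hKn, hKQ⟩ := exists_not_normal_sylow_and_normal_complement hnil hprop
  have hG : ¬ IsMulCommutative G := fun _ => hQ inferInstance
  have hQtop : (Q : Subgroup G) ≠ ⊤ := fun h => hQ (h ▸ inferInstance)
  have hQbot : (Q : Subgroup G) ≠ ⊥ := fun h => hQ (h ▸ inferInstance)
  have hKbot : K ≠ ⊥ := fun h => hQtop (isComplement'_bot_left.mp (h ▸ hKQ))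
  have hKcomm := hprop K <|
    lt_top_iff_ne_top.mpr fun h => hQbot (isComplement'_top_left.mp (h ▸ hKQ))
  obtain ⟨x, hxQ, hsup⟩ := exists_sup_zpowers_eq_top hprop hG hKQ.sup_eq_top hQtop
  have hQx : zpowers x = Q := eq_of_le_of_sup_eq_top_of_inf_eq_bot (zpowers_le.mpr hxQ)
    (mul_normal _ K) (sup_comm K _ ▸ hsup) (inf_comm K Q ▸ hKQ.disjoint.eq_bot)
  have hcopQ : (Nat.card K).Coprime (Nat.card Q) := hKQ.index_eq_card ▸ Q.card_coprime_index.symm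
  have hcop : (Nat.card K).Coprime (orderOf x) := by rwa [← Nat.card_zpowers, hQx]
  set p := (Nat.card K).minFac
  have hp : p.Prime := Nat.minFac_prime (K.card_eq_one.not.mpr hKbot)
  have : Fact p.Prime := ⟨hp⟩
  have hpQ : ¬ p ∣ Nat.card Q :=
    (Nat.Prime.coprime_iff_not_dvd hp).mp (hcopQ.coprime_dvd_left (Nat.minFac_dvd _))
  have hexp := pow_eq_one_of_mem hprop hG hsup hcop (Nat.minFac_dvd _)
  have hKp : IsPGroup p K := fun k => ⟨1, Subtype.ext (by simpa using hexp k k.2)⟩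
  refine ⟨p, q, hp, Fact.out, fun hpq => hpQ ?_,
    hKp.toSylow (hKQ.symm.index_eq_card ▸ hpQ), Q, ?_⟩
  · exact hpq ▸ (Q.2.card_eq_or_dvd.resolve_left (Q.1.card_eq_one.not.mpr hQbot))
  simp only [IsPGroup.toSylow_coe]
  exact ⟨hKn, hQx ▸ inferInstance, eq_commutator hprop hG hsup hcop, hKcomm,
    hexp, hKQ.disjoint.eq_bot, hKQ.sup_eq_top⟩
end

section
/- Let G be a finite group and p a prime such that for every minimal non-abelian subgroup H of G, the commutator subgroup H' is not a p-group. If P is a Sylow p-subgroup of G, then P is abelian and N_G(P) = C_G(P), and hence G has a normal p-complement. -/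
/-- A subgroup is minimal non-abelian if it is non-abelian and all its proper
subgroups are abelian. -/
def IsMinNonab (G : Type*) [Group G] (H : Subgroup G) : Prop :=
  ¬ IsMulCommutative H ∧ ∀ K : Subgroup G, K < H → IsMulCommutative K

/-!
Every non-abelian subgroup contains a minimal non-abelian one, whose commutator subgroup is
contained in that of the larger group. Hence under the hypothesis every subgroup `S` whose
commutator subgroup is a `p`-group is abelian. This applies to `P` itself, and, for `x`
normalizing `P`, to `S = P ⊔ ⟨x⟩`: the quotient `S / P` is cyclic, so `⁅S, S⁆ ≤ P`. Thus `x`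
commutes with `P`, i.e. `N_G(P) = C_G(P)`, and Burnside's transfer theorem gives the normal
`p`-complement.
-/

open Subgroup

theorem IsMinNonab.exists_le {G : Type*} [Group G] [Finite G] {S : Subgroup G}
    (hS : ¬ IsMulCommutative S) : ∃ H : Subgroup G, IsMinNonab G H ∧ H ≤ S := by
  obtain ⟨H, ⟨hHS, hH⟩, hmin⟩ := (Finite.to_wellFoundedLT (α := Subgroup G)).wf.has_min
    {K : Subgroup G | K ≤ S ∧ ¬ IsMulCommutative K} ⟨S, le_rfl, hS⟩
  exact ⟨H, ⟨hH, fun K hK => not_not.mp fun hK' => hmin K ⟨hK.le.trans hHS, hK'⟩ hK⟩, hHS⟩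

theorem commutator_sup_zpowers_le {G : Type*} [Group G] {N : Subgroup G} {x : G}
    (hx : x ∈ normalizer (N : Set G)) : ⁅N ⊔ zpowers x, N ⊔ zpowers x⁆ ≤ N := by
  set S := N ⊔ zpowers x
  have hNS : N ≤ S := le_sup_left
  have hxS : zpowers x ≤ S := le_sup_right
  have : (N.subgroupOf S).Normal :=
    normal_subgroupOf_of_le_normalizer (sup_le le_normalizer (zpowers_le.mpr hx))
  have hsup : N.subgroupOf S ⊔ (zpowers x).subgroupOf S = ⊤ := by
    rw [← subgroupOf_sup hNS hxS, subgroupOf_self]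
  have hcomm := Normal.commutator_le_of_self_sup_commutative_eq_top hsup inferInstance
  rwa [← S.map_subtype_commutator, map_le_iff_le_comap]

section

variable {G : Type*} [Group G] [Finite G] {p : ℕ}
  (h : ∀ H : Subgroup G, IsMinNonab G H → ¬ IsPGroup p ↥⁅H, H⁆)
include h

theorem isMulCommutative_of_isPGroup_commutator {S : Subgroup G} (hS : IsPGroup p ↥⁅S, S⁆) :
    IsMulCommutative S := by
  by_contra hS'
  obtain ⟨H, hH, hHS⟩ := IsMinNonab.exists_le hS'
  exact h H hH (hS.to_le (commutator_mono hHS hHS))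

theorem Sylow.isMulCommutative_of_forall_isMinNonab (P : Sylow p G) :
    IsMulCommutative (P : Subgroup G) :=
  isMulCommutative_of_isPGroup_commutator h (P.isPGroup'.to_le (commutator_le_self _))

theorem Sylow.normalizer_le_centralizer_of_forall_isMinNonab (P : Sylow p G) :
    normalizer (P : Set G) ≤ centralizer (P : Set G) := by
  intro x hx
  have := isMulCommutative_of_isPGroup_commutator h
    (P.isPGroup'.to_le (commutator_sup_zpowers_le hx))
  exact fun g hg => setLike_mul_comm (mem_sup_left hg) (mem_sup_right (mem_zpowers x))

end

/-- If no minimal non-abelian subgroup of `G` has `p`-group commutator subgroup, then a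
Sylow `p`-subgroup `P` is abelian, `N_G(P) = C_G(P)`, and `G` has a normal
`p`-complement. -/
theorem stmt1 {G : Type*} [Group G] [Finite G] (p : ℕ) (hp : p.Prime)
    (h : ∀ H : Subgroup G, IsMinNonab G H → ¬ IsPGroup p ↥⁅H, H⁆)
    (P : Sylow p G) :
    IsMulCommutative (P : Subgroup G) ∧
    Subgroup.normalizer ((P : Subgroup G) : Set G) = Subgroup.centralizer ((P : Subgroup G) : Set G) ∧
    ∃ K : Subgroup G, K.Normal ∧ ¬ p ∣ Nat.card K ∧
      K ⊓ (P : Subgroup G) = ⊥ ∧ K ⊔ (P : Subgroup G) = ⊤ := by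
  have : Fact p.Prime := ⟨hp⟩
  have hNC := P.normalizer_le_centralizer_of_forall_isMinNonab h
  have hK := MonoidHom.ker_transferSylow_isComplement' P hNC
  exact ⟨P.isMulCommutative_of_forall_isMinNonab h,
    hNC.antisymm (centralizer_le_normalizer _), _, inferInstance,
    MonoidHom.not_dvd_card_ker_transferSylow P hNC, disjoint_iff.mp hK.disjoint, hK.sup_eq_top⟩
end

section
/- Let G be a finite group and let π₁(G) be the set of primes p such that some minimal non-abelian subgroup H of G has H' a p-group. Then G = K ⋊ A where K is a normal Hall π₁(G)-subgroup and A is an abelian Hall π₁(G)'-subgroup. -/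
/-- `pi1 G` : the set of primes `p` such that some minimal non-abelian subgroup of `G`
has commutator subgroup a `p`-group. -/
def pi1 (G : Type*) [Group G] : Set ℕ :=
  {p | p.Prime ∧ ∃ H : Subgroup G, IsMinNonab G H ∧ IsPGroup p ↥⁅H, H⁆}

/-!
For a prime `r ∉ π₁(G)` and an `r`-subgroup `R`, every `g ∈ N_G(R)` centralizes `R`:
the derived subgroup of `R⟨g⟩` lies in `R`, because `R⟨g⟩ / R` is cyclic, so a non-abelian
`R⟨g⟩` would contain a minimal non-abelian subgroup with derived subgroup an `r`-group.
Burnside's transfer theorem then gives a normal `r`-complement `N_r` for every such `r`,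
with `G / N_r` abelian. The intersection `K` of the `N_r` is a normal Hall `π₁(G)`-subgroup,
Schur–Zassenhaus supplies a complement `A`, and `A` is abelian because `π₁(A) ⊆ π₁(G)`
makes the same transfer argument kill every prime divisor of `|A'|`.
-/

open Subgroup

section MinNonab

variable {G G' : Type*} [Group G] [Group G']

theorem IsMinNonab.map {f : G →* G'} (hf : Function.Injective f) {M : Subgroup G}
    (hM : IsMinNonab G M) : IsMinNonab G' (M.map f) := by
  refine ⟨fun hc => hM.1 ?_, fun L hL => ?_⟩
  · rw [← comap_map_eq_self_of_injective hf M]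
    exact comap_injective_isMulCommutative _ hf
  · have hL_eq : (L.comap f).map f = L := map_comap_eq_self (hL.le.trans (map_le_range f M))
    have hlt : L.comap f < M := by rwa [← map_lt_map_iff_of_injective hf, hL_eq]
    have := hM.2 _ hlt
    rw [← hL_eq]
    infer_instance

theorem pi1_subset_of_injective {f : G →* G'} (hf : Function.Injective f) :
    pi1 G ⊆ pi1 G' := by
  rintro p ⟨hp, M, hM, hMp⟩
  exact ⟨hp, M.map f, hM.map hf, map_commutator M M f ▸ hMp.map f⟩

theorem exists_isMinNonab_le [Finite G] {X : Subgroup G} (hX : ¬ IsMulCommutative X) :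
    ∃ M ≤ X, IsMinNonab G M := by
  induction X using WellFoundedLT.induction with
  | _ X ih =>
    by_cases h : ∀ K < X, IsMulCommutative K
    · exact ⟨X, le_rfl, hX, h⟩
    · push Not at h
      obtain ⟨K, hKX, hK⟩ := h
      obtain ⟨M, hMK, hM⟩ := ih K hKX hK
      exact ⟨M, hMK.trans hKX.le, hM⟩

theorem mem_pi1_of_commutator_le [Finite G] {r : ℕ} (hr : r.Prime) {R X : Subgroup G}
    (hR : IsPGroup r R) (hX : ¬ IsMulCommutative X) (hXR : ⁅X, X⁆ ≤ R) : r ∈ pi1 G := by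
  obtain ⟨M, hMX, hM⟩ := exists_isMinNonab_le hX
  exact ⟨hr, M, hM, hR.to_le ((commutator_mono hMX hMX).trans hXR)⟩

end MinNonab

section Commutator

variable {G : Type*} [Group G]

theorem commutator_sup_zpowers_le_of_normal (R : Subgroup G) [R.Normal] (g : G) :
    ⁅R ⊔ zpowers g, R ⊔ zpowers g⁆ ≤ R := by
  have hmap : (R ⊔ zpowers g).map (QuotientGroup.mk' R) = zpowers (QuotientGroup.mk' R g) := by
    rw [Subgroup.map_sup, QuotientGroup.map_mk'_self, MonoidHom.map_zpowers, bot_sup_eq]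
  have hbot : ⁅R ⊔ zpowers g, R ⊔ zpowers g⁆.map (QuotientGroup.mk' R) = ⊥ := by
    rw [map_commutator, hmap, commutator_self_eq_bot_iff]
    infer_instance
  rwa [Subgroup.map_eq_bot_iff, QuotientGroup.ker_mk'] at hbot

theorem commutator_sup_zpowers_le_s2 {R : Subgroup G} {g : G} (hg : g ∈ normalizer (R : Set G)) :
    ⁅R ⊔ zpowers g, R ⊔ zpowers g⁆ ≤ R := by
  set N := normalizer (R : Set G)
  have hR : (R.subgroupOf N).map N.subtype = R := by
    rw [subgroupOf_map_subtype, inf_of_le_left le_normalizer]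
  have hX : (R.subgroupOf N ⊔ zpowers ⟨g, hg⟩).map N.subtype = R ⊔ zpowers g := by
    rw [Subgroup.map_sup, hR, MonoidHom.map_zpowers]
    rfl
  rw [← hX, ← map_commutator]
  exact (map_mono (commutator_sup_zpowers_le_of_normal _ _)).trans hR.le

end Commutator

theorem IsPGroup.le_of_index_eq_pow {G : Type*} [Group G] {p q : ℕ} [Fact p.Prime]
    [Fact q.Prime] (hpq : p ≠ q) {S N : Subgroup G} [N.Normal] (hS : IsPGroup p S)
    (hN : ∃ n, N.index = q ^ n) : S ≤ N := by
  obtain ⟨n, hn⟩ := hN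
  have hq : IsPGroup q (G ⧸ N) := IsPGroup.of_card (by rw [← index_eq_card, hn])
  have := IsPGroup.disjoint_of_ne p q hpq _ _ (hS.map (QuotientGroup.mk' N))
    (hq.to_subgroup (S.map (QuotientGroup.mk' N)))
  rwa [disjoint_self, Subgroup.map_eq_bot_iff, QuotientGroup.ker_mk'] at this

section Transfer

variable {G : Type*} [Group G] [Finite G]

theorem normalizer_le_centralizer_of_notMem_pi1 {r : ℕ} (hr : r.Prime) (hr' : r ∉ pi1 G)
    {R : Subgroup G} (hR : IsPGroup r R) : normalizer (R : Set G) ≤ centralizer (R : Set G) := by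
  intro g hg
  have hX : IsMulCommutative ↥(R ⊔ zpowers g) := by
    by_contra hX
    exact hr' (mem_pi1_of_commutator_le hr hR hX (commutator_sup_zpowers_le_s2 hg))
  rw [mem_centralizer_iff]
  intro x hx
  exact setLike_mul_comm (s := R ⊔ zpowers g) (mem_sup_left hx) (mem_sup_right (mem_zpowers g))

theorem exists_normal_complement_of_notMem_pi1 {r : ℕ} (hr : r.Prime) (hr' : r ∉ pi1 G) :
    ∃ N : Subgroup G, N.Normal ∧ ¬ r ∣ Nat.card N ∧ (∃ n, N.index = r ^ n) ∧
      commutator G ≤ N := by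
  have := Fact.mk hr
  obtain ⟨R⟩ : Nonempty (Sylow r G) := Sylow.nonempty
  have hNC := normalizer_le_centralizer_of_notMem_pi1 hr hr' R.isPGroup'
  set f := MonoidHom.transferSylow R hNC
  refine ⟨f.ker, inferInstance, MonoidHom.not_dvd_card_ker_transferSylow R hNC, ?_, ?_⟩
  · rw [(MonoidHom.ker_transferSylow_isComplement' R hNC).symm.index_eq_card]
    exact IsPGroup.iff_card.1 R.isPGroup'
  · rw [_root_.commutator_def, commutator_le]
    intro x _ y _
    rw [MonoidHom.mem_ker, map_commutatorElement, commutatorElement_eq_one_iff_mul_comm]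
    exact Subtype.ext (hNC (le_normalizer (f y).2) _ (f x).2)

theorem isMulCommutative_of_forall_notMem_pi1
    (h : ∀ p : ℕ, p.Prime → p ∣ Nat.card G → p ∉ pi1 G) : IsMulCommutative G := by
  rw [← commutator_eq_bot_iff]
  by_contra hne
  obtain ⟨s, hs, hsd⟩ := Nat.exists_prime_and_dvd (mt card_eq_one.1 hne)
  obtain ⟨N, -, hN, -, hcomm⟩ := exists_normal_complement_of_notMem_pi1 hs
    (h s hs (hsd.trans (card_subgroup_dvd_card _)))
  exact hN (hsd.trans (card_dvd_of_le hcomm))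

end Transfer

theorem exists_normal_hall_pi1 (G : Type*) [Group G] [Finite G] :
    ∃ K : Subgroup G, K.Normal ∧ (∀ r : ℕ, r.Prime → r ∣ Nat.card K → r ∈ pi1 G) ∧
      ∀ s : ℕ, s.Prime → s ∣ K.index → s ∉ pi1 G := by
  choose N hN_normal hN_card hN_index using fun r : {r : ℕ // r.Prime ∧ r ∉ pi1 G} =>
    exists_normal_complement_of_notMem_pi1 r.2.1 r.2.2
  refine ⟨⨅ r, N r, normal_iInf_normal hN_normal, fun r hr hdvd => ?_,
    fun s hs hdvd hmem => ?_⟩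
  · by_contra hr'
    exact hN_card ⟨r, hr, hr'⟩ (hdvd.trans (card_dvd_of_le (iInf_le _ _)))
  · have := Fact.mk hs
    obtain ⟨S⟩ : Nonempty (Sylow s G) := Sylow.nonempty
    have hSK : (S : Subgroup G) ≤ ⨅ r, N r := le_iInf fun r => by
      have := Fact.mk r.2.1
      have := hN_normal r
      exact IsPGroup.le_of_index_eq_pow (fun h : s = r.1 => r.2.2 (h ▸ hmem)) S.isPGroup'
        (hN_index r).1
    exact S.not_dvd_index (hdvd.trans (index_dvd_of_le hSK))

/-- `G = K ⋊ A` with `K` a normal Hall `π₁(G)`-subgroup and `A` an abelian Hall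
`π₁(G)'`-subgroup. -/
theorem stmt2 {G : Type*} [Group G] [Finite G] :
    ∃ K A : Subgroup G, K.Normal ∧ IsMulCommutative A ∧
      (∀ r : ℕ, r.Prime → r ∣ Nat.card K → r ∈ pi1 G) ∧
      (∀ r : ℕ, r.Prime → r ∣ Nat.card A → r ∉ pi1 G) ∧
      K ⊓ A = ⊥ ∧ K ⊔ A = ⊤ := by
  obtain ⟨K, hK, hK_card, hK_index⟩ := exists_normal_hall_pi1 G
  have hcop : (Nat.card K).Coprime K.index :=
    Nat.coprime_of_dvd fun p hp hpK hpi => hK_index p hp hpi (hK_card p hp hpK)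
  obtain ⟨A, hA⟩ := exists_right_complement'_of_coprime hcop
  have hA_card : ∀ r : ℕ, r.Prime → r ∣ Nat.card A → r ∉ pi1 G :=
    fun r hr hdvd => hK_index r hr (hA.symm.index_eq_card ▸ hdvd)
  have hA_comm : IsMulCommutative A :=
    isMulCommutative_of_forall_notMem_pi1 fun p hp hdvd hmem =>
      hA_card p hp hdvd (pi1_subset_of_injective A.subtype_injective hmem)
  exact ⟨K, A, hK, hA_comm, hK_card, hA_card, disjoint_iff.1 hA.disjoint, hA.sup_eq_top⟩
end

section
/- Let G be a non-abelian finite p-group. Then G is minimal non-abelian if and only if G is 2-generated and |G'| = p. -/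
open Subgroup
open scoped commutatorElement Pointwise

section

variable {G : Type*} [Group G]

theorem Subgroup.normal_of_le_center {N : Subgroup G} (hN : N ≤ center G) : N.Normal :=
  ⟨fun n hn g => by rwa [mem_center_iff.mp (hN hn) g, mul_inv_cancel_right]⟩

theorem commutatorElement_pow_left_of_mem_center {a b : G} (h : ⁅a, b⁆ ∈ center G) (n : ℕ) :
    ⁅a ^ n, b⁆ = ⁅a, b⁆ ^ n := by
  induction n with
  | zero => simp
  | succ n ih =>
    have hmul : ⁅a * a ^ n, b⁆ = a * ⁅a ^ n, b⁆ * a⁻¹ * ⁅a, b⁆ := by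
      simp only [commutatorElement_def]; group
    rw [pow_succ', hmul, ih, mem_center_iff.mp (pow_mem h n) a, pow_succ]
    group

theorem exists_mul_ne_mul_of_not_isMulCommutative (h : ¬IsMulCommutative (⊤ : Subgroup G)) :
    ∃ a b : G, a * b ≠ b * a := by
  by_contra! hcomm
  exact h ⟨⟨fun u v => Subtype.ext (hcomm u v)⟩⟩

theorem isMulCommutative_of_le {H K : Subgroup G} (hHK : H ≤ K) [IsMulCommutative K] :
    IsMulCommutative H :=
  ⟨⟨fun u v => Subtype.ext (setLike_mul_comm (hHK u.2) (hHK v.2))⟩⟩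

theorem closure_pair_eq_top_of_surjective {H : Type*} [Group H] {f : G →* H}
    (hf : Function.Surjective f) {a b : G} (hab : closure {a, b} = ⊤) :
    closure {f a, f b} = ⊤ := by
  rw [← Set.image_pair, ← MonoidHom.map_closure, hab, ← MonoidHom.range_eq_map,
    MonoidHom.range_eq_top]
  exact hf

theorem commutator_le_of_closure_pair_eq_top {a b : G} (hab : closure {a, b} = ⊤)
    {W : Subgroup G} [W.Normal] (hW : ⁅a, b⁆ ∈ W) : commutator G ≤ W := by
  rw [← Normal.quotient_commutative_iff_commutator_le]
  set f := QuotientGroup.mk' W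
  have hcomm : f a * f b = f b * f a := by
    rw [← commutatorElement_eq_one_iff_mul_comm, ← map_commutatorElement,
      QuotientGroup.mk'_apply, QuotientGroup.eq_one_iff]
    exact hW
  have htop : closure {f a, f b} = ⊤ :=
    closure_pair_eq_top_of_surjective (QuotientGroup.mk'_surjective W) hab
  have := isMulCommutative_closure (k := {f a, f b}) (by
    rintro x (rfl | rfl) y (rfl | rfl) <;> first | rfl | exact hcomm | exact hcomm.symm)
  rw [htop] at this
  exact ⟨⟨fun u v => setLike_mul_comm (s := (⊤ : Subgroup _)) (mem_top u) (mem_top v)⟩⟩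

theorem card_le_orderOf_mul_orderOf [IsMulCommutative G] {x y : G} (hxy : closure {x, y} = ⊤) :
    Nat.card G ≤ orderOf x * orderOf y := by
  have hsup : ((zpowers x ⊔ zpowers y : Subgroup G) : Set G) = Set.univ := by
    rw [zpowers_eq_closure, zpowers_eq_closure, ← Subgroup.closure_union, Set.singleton_union,
      hxy, coe_top]
  calc Nat.card G = Nat.card (Set.univ : Set G) := Nat.card_univ.symm
    _ = Nat.card ((zpowers x : Set G) * (zpowers y : Set G)) := by rw [← hsup, mul_normal]
    _ ≤ Nat.card (zpowers x) * Nat.card (zpowers y) := Set.natCard_mul_le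
    _ = orderOf x * orderOf y := by rw [Nat.card_zpowers, Nat.card_zpowers]

theorem closure_singleton_ne_top (h : ¬IsMulCommutative (⊤ : Subgroup G)) (a : G) :
    closure {a} ≠ ⊤ := by
  intro ha
  have := isMulCommutative_closure (k := {a}) (by rintro x rfl y rfl; rfl)
  exact h (ha ▸ this)

theorem inf_le_center_of_sup_eq_top {M N : Subgroup G} [IsMulCommutative M]
    [IsMulCommutative N] (h : M ⊔ N = ⊤) : M ⊓ N ≤ center G := by
  rintro g ⟨hgM, hgN⟩
  have hle : M ⊔ N ≤ centralizer {g} :=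
    sup_le (fun m hm => mem_centralizer_singleton_iff.mpr (setLike_mul_comm hm hgM))
      (fun n hn => mem_centralizer_singleton_iff.mpr (setLike_mul_comm hn hgN))
  rw [h] at hle
  exact mem_center_iff.mpr fun u => mem_centralizer_singleton_iff.mp (hle (mem_top u))

theorem IsMinNonab.closure_pair_eq_top (h : IsMinNonab G ⊤) {a b : G} (hab : a * b ≠ b * a) :
    closure {a, b} = ⊤ := by
  by_contra hne
  have := h.2 _ (lt_top_iff_ne_top.mpr hne)
  exact hab (setLike_mul_comm (subset_closure (Set.mem_insert a {b}))
    (subset_closure (Set.mem_insert_of_mem a rfl)))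

end

namespace IsPGroup

variable {p : ℕ} [Fact p.Prime] {G : Type*} [Group G] [Finite G] (hG : IsPGroup p G)
include hG

theorem isCyclic_of_card_le (h : Nat.card G ≤ p) : IsCyclic G := by
  rcases hG.card_eq_or_dvd with h1 | hdvd
  · have := (Nat.card_eq_one_iff_unique.mp h1).1
    exact isCyclic_of_subsingleton
  · exact isCyclic_of_prime_card (le_antisymm h (Nat.le_of_dvd Nat.card_pos hdvd))

theorem index_eq_of_isCoatom {M : Subgroup G} (hM : IsCoatom M) : M.index = p := by
  have hp : p.Prime := Fact.out
  obtain ⟨n, hn⟩ := IsPGroup.iff_card.mp hG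
  obtain ⟨m, hm⟩ := IsPGroup.iff_card.mp (hG.to_subgroup M)
  have hmn : m < n := by
    by_contra! h
    refine hM.1 ((card_eq_iff_eq_top M).mp (le_antisymm (card_le_card_group M) ?_))
    rw [hn, hm]
    exact Nat.pow_le_pow_right hp.pos h
  obtain ⟨K, hK, hMK⟩ := Sylow.exists_subgroup_card_pow_succ (hn ▸ pow_dvd_pow p hmn) hm
  have hKtop : K = ⊤ := hM.2 K (hMK.lt_of_ne (by
    rintro rfl
    exact absurd (Nat.pow_right_injective hp.two_le (hm ▸ hK)) (by omega)))
  have hcard := M.card_mul_index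
  rw [← card_top (G := G), ← hKtop, hK, hm, pow_succ] at hcard
  exact Nat.eq_of_mul_eq_mul_left (pow_pos hp.pos m) hcard

theorem normal_of_isCoatom {M : Subgroup G} (hM : IsCoatom M) : M.Normal :=
  have := hG.isNilpotent
  NormalizerCondition.normal_of_coatom M Group.normalizerCondition_of_isNilpotent hM

theorem pow_mem_of_isCoatom {M : Subgroup G} (hM : IsCoatom M) (g : G) : g ^ p ∈ M := by
  have := hG.normal_of_isCoatom hM
  exact hG.index_eq_of_isCoatom hM ▸ M.pow_index_mem g

theorem commutator_le_of_isCoatom {M : Subgroup G} (hM : IsCoatom M) : commutator G ≤ M := by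
  have := hG.normal_of_isCoatom hM
  have : IsCyclic (G ⧸ M) := isCyclic_of_prime_card (hG.index_eq_of_isCoatom hM)
  rw [← Normal.quotient_commutative_iff_commutator_le]
  exact IsCyclic.isMulCommutative

theorem le_center_of_card_eq_prime {N : Subgroup G} [N.Normal] (hN : Nat.card N = p) :
    N ≤ center G := by
  obtain ⟨n, hn, hne⟩ :=
    (hG.of_equiv ConjAct.toConjAct).exists_fixed_point_of_prime_dvd_card_of_fixed_point
      N (hN ▸ dvd_rfl) (a := 1) (fun g => smul_one g)
  have hn_center : (n : G) ∈ center G := by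
    rw [mem_center_iff]
    intro g
    have := congrArg Subtype.val (hn (ConjAct.toConjAct g))
    rw [ConjAct.Subgroup.val_conj_smul, ConjAct.smul_def, ConjAct.ofConjAct_toConjAct] at this
    exact mul_inv_eq_iff_eq_mul.mp this
  intro x hx
  obtain ⟨k, hk⟩ :=
    mem_zpowers_iff.mp (mem_zpowers_of_prime_card hN hne.symm (g' := ⟨x, hx⟩))
  have hx' : x = (n : G) ^ k := by rw [← coe_zpow, hk]
  exact hx' ▸ zpow_mem hn_center k

theorem card_commutator_of_isMinNonab (h : IsMinNonab G ⊤) : Nat.card (commutator G) = p := by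
  obtain ⟨a, b, hab⟩ := exists_mul_ne_mul_of_not_isMulCommutative h.1
  have hgen := h.closure_pair_eq_top hab
  obtain ⟨M, hM, haM⟩ :=
    (eq_top_or_exists_le_coatom (closure {a})).resolve_left (closure_singleton_ne_top h.1 a)
  obtain ⟨N, hN, hbN⟩ :=
    (eq_top_or_exists_le_coatom (closure {b})).resolve_left (closure_singleton_ne_top h.1 b)
  replace haM : a ∈ M := haM (subset_closure rfl)
  replace hbN : b ∈ N := hbN (subset_closure rfl)
  have := h.2 M hM.lt_top
  have := h.2 N hN.lt_top
  have hMN : M ≠ N := by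
    rintro rfl
    exact hab (setLike_mul_comm haM hbN)
  have hZ : M ⊓ N ≤ center G := inf_le_center_of_sup_eq_top (hM.sup_eq_top_of_ne hN hMN)
  set c := ⁅a, b⁆
  have hcG' : c ∈ commutator G := commutator_mem_commutator (mem_top a) (mem_top b)
  have hcZ : c ∈ center G :=
    hZ ⟨hG.commutator_le_of_isCoatom hM hcG', hG.commutator_le_of_isCoatom hN hcG'⟩
  have hcp : c ^ p = 1 := by
    rw [← commutatorElement_pow_left_of_mem_center hcZ, commutatorElement_eq_one_iff_mul_comm]
    exact (mem_center_iff.mp (hZ ⟨pow_mem haM p, hG.pow_mem_of_isCoatom hN a⟩) b).symm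
  have := normal_of_le_center (zpowers_le.mpr hcZ)
  have hG' : commutator G = zpowers c :=
    le_antisymm (commutator_le_of_closure_pair_eq_top hgen (mem_zpowers c)) (zpowers_le.mpr hcG')
  rw [hG', Nat.card_zpowers]
  exact orderOf_eq_prime hcp (mt commutatorElement_eq_one_iff_mul_comm.mp hab)

theorem isMulCommutative_of_relIndex_le {N M : Subgroup G} (hN : N ≤ center G)
    (h : N.relIndex M ≤ p) : IsMulCommutative M := by
  have := normal_of_le_center hN
  have : IsCyclic (M ⧸ N.subgroupOf M) := ((hG.to_subgroup M).to_quotient _).isCyclic_of_card_le h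
  apply (QuotientGroup.mk' (N.subgroupOf M)).isMulCommutative_of_isCyclic_of_ker_le_center
  rw [QuotientGroup.ker_mk']
  intro m hm
  rw [mem_subgroupOf] at hm
  exact mem_center_iff.mpr fun u => Subtype.ext (mem_center_iff.mp (hN hm) u)

theorem pow_mem_center_of_card_commutator (hcard : Nat.card (commutator G) = p) (g : G) :
    g ^ p ∈ center G := by
  refine mem_center_iff.mpr fun h => (commutatorElement_eq_one_iff_mul_comm.mp ?_).symm
  have hgh : ⁅g, h⁆ ∈ commutator G := commutator_mem_commutator (mem_top g) (mem_top h)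
  rw [commutatorElement_pow_left_of_mem_center (hG.le_center_of_card_eq_prime hcard hgh)]
  simpa [hcard] using
    congrArg Subtype.val (pow_card_eq_one' (G := commutator G) (x := ⟨_, hgh⟩))

theorem isMulCommutative_of_lt_top {x y : G} (hxy : closure {x, y} = ⊤)
    (hcard : Nat.card (commutator G) = p) {K : Subgroup G} (hK : K < ⊤) : IsMulCommutative K := by
  have hp : p.Prime := Fact.out
  set Φ := commutator G ⊔ closure (Set.range (· ^ p : G → G))
  have hΦZ : Φ ≤ center G := sup_le (hG.le_center_of_card_eq_prime hcard)
    (closure_le _ |>.mpr (Set.range_subset_iff.mpr (hG.pow_mem_center_of_card_commutator hcard)))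
  have := normal_of_le_center hΦZ
  have hΦidx : Φ.index ≤ p * p := by
    have : IsMulCommutative (G ⧸ Φ) :=
      Normal.quotient_commutative_iff_commutator_le.mpr le_sup_left
    have hpow (g : G) : (g : G ⧸ Φ) ^ p = 1 := by
      rw [← QuotientGroup.mk_pow, QuotientGroup.eq_one_iff]
      exact le_sup_right (a := commutator G) (subset_closure ⟨g, rfl⟩)
    calc Φ.index ≤ orderOf (x : G ⧸ Φ) * orderOf (y : G ⧸ Φ) :=
          card_le_orderOf_mul_orderOf
            (closure_pair_eq_top_of_surjective (QuotientGroup.mk'_surjective Φ) hxy)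
      _ ≤ p * p := Nat.mul_le_mul (orderOf_le_of_pow_eq_one hp.pos (hpow x))
          (orderOf_le_of_pow_eq_one hp.pos (hpow y))
  obtain ⟨M, hM, hKM⟩ := (eq_top_or_exists_le_coatom K).resolve_left hK.ne
  have hΦM : Φ ≤ M := sup_le (hG.commutator_le_of_isCoatom hM)
    (closure_le _ |>.mpr (Set.range_subset_iff.mpr (hG.pow_mem_of_isCoatom hM)))
  have hrel : Φ.relIndex M ≤ p := by
    have := relIndex_mul_index hΦM
    rw [hG.index_eq_of_isCoatom hM] at this
    exact Nat.le_of_mul_le_mul_right (this ▸ hΦidx) hp.pos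
  have := hG.isMulCommutative_of_relIndex_le hΦZ hrel
  exact isMulCommutative_of_le hKM

theorem isMinNonab_of_closure_pair_eq_top {x y : G} (hxy : closure {x, y} = ⊤)
    (hcard : Nat.card (commutator G) = p) : IsMinNonab G ⊤ := by
  refine ⟨fun hcomm => ?_, fun K hK => hG.isMulCommutative_of_lt_top hxy hcard hK⟩
  have : commutator G = ⊥ := commutator_eq_bot_iff_le_centralizer.mpr (le_centralizer ⊤)
  rw [this, card_bot] at hcard
  exact (Fact.out : p.Prime).one_lt.ne hcard

end IsPGroup

theorem stmt8_general {G : Type*} [Group G] [Finite G] (p : ℕ) (hp : p.Prime)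
    (hG : IsPGroup p G) :
    IsMinNonab G ⊤ ↔
      ((∃ a b : G, Subgroup.closure {a, b} = ⊤) ∧
       (¬ ∃ a : G, Subgroup.closure ({a} : Set G) = ⊤) ∧
       Nat.card (commutator G) = p) := by
  have : Fact p.Prime := ⟨hp⟩
  constructor
  · intro h
    obtain ⟨a, b, hab⟩ := exists_mul_ne_mul_of_not_isMulCommutative h.1
    exact ⟨⟨a, b, h.closure_pair_eq_top hab⟩,
      fun ⟨t, ht⟩ => closure_singleton_ne_top h.1 t ht, hG.card_commutator_of_isMinNonab h⟩
  · rintro ⟨⟨x, y, hxy⟩, -, hcard⟩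
    exact hG.isMinNonab_of_closure_pair_eq_top hxy hcard

/-- A non-abelian finite `p`-group is minimal non-abelian iff `d(G) = 2` and `|G'| = p`. -/
theorem stmt8 {G : Type*} [Group G] [Finite G] (p : ℕ) (hp : p.Prime)
    (hG : IsPGroup p G) (hna : ¬ ∀ a b : G, a * b = b * a) :
    IsMinNonab G ⊤ ↔
      ((∃ a b : G, Subgroup.closure {a, b} = ⊤) ∧
       (¬ ∃ a : G, Subgroup.closure ({a} : Set G) = ⊤) ∧
       Nat.card (commutator G) = p) :=
  stmt8_general p hp hG
end

section
/- Let G be a finite abelian p-group and 1 < H ≤ G. Then there exists a subgroup N ≤ G such that G/N is cyclic and |H : H ∩ N| = p. -/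
/-!
Choose a character `φ : G →* ℂˣ` that is nontrivial on `H`. Its image `φ(H)` is a nontrivial
finite subgroup of `ℂˣ`, hence cyclic of order `p ^ k` with `k ≥ 1`, and raising to the power
`p ^ (k - 1)` maps it onto a group of order `p`. So `ψ = φ ^ p ^ (k - 1)` has
`|H : H ∩ ker ψ| = |ψ(H)| = p`, and `G ⧸ ker ψ` embeds into `ℂˣ`, so it is cyclic.
-/

theorem Subgroup.card_map_powMonoidHom_of_isCyclic {M : Type*} [CommGroup M] (K : Subgroup M)
    [IsCyclic K] {n : ℕ} (hn : n ≠ 0) (hdvd : n ∣ Nat.card K) :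
    Nat.card (K.map (powMonoidHom n)) = Nat.card K / n := by
  obtain ⟨g, rfl⟩ := K.isCyclic_iff_exists_zpowers_eq_top.mp ‹_›
  rw [MonoidHom.map_zpowers, Nat.card_zpowers, Nat.card_zpowers, powMonoidHom_apply] at *
  exact orderOf_pow_of_dvd hn hdvd

theorem IsPGroup.exists_card_map_powMonoidHom_eq_prime {M : Type*} [CommGroup M] {p : ℕ}
    [hp : Fact p.Prime] {K : Subgroup M} [IsCyclic K] [Finite K] (hK : IsPGroup p K)
    (hK₁ : K ≠ ⊥) : ∃ m : ℕ, Nat.card (K.map (powMonoidHom m)) = p := by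
  obtain ⟨k, hk⟩ := hK.exists_card_eq
  have hk₀ : k ≠ 0 := by
    rintro rfl
    exact hK₁ (K.eq_bot_of_card_eq hk)
  refine ⟨p ^ (k - 1), ?_⟩
  rw [K.card_map_powMonoidHom_of_isCyclic (pow_ne_zero _ hp.out.ne_zero)
      (hk ▸ pow_dvd_pow p (k.sub_le 1)), hk, ← pow_sub_one_mul hk₀,
    Nat.mul_div_cancel_left _ (pow_pos hp.out.pos _)]

theorem MonoidHom.isCyclic_quotient_ker_of_units {G R : Type*} [Group G] [Finite G] [CommRing R]
    [IsDomain R] (f : G →* Rˣ) : IsCyclic (G ⧸ f.ker) :=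
  have : Finite f.range := Set.finite_range f
  isCyclic_of_surjective _ (QuotientGroup.quotientKerEquivRange f).symm.surjective

theorem CommGroup.exists_map_ne_bot_of_hasEnoughRootsOfUnity (G M : Type*) [CommGroup G]
    [Finite G] [CommMonoid M] [HasEnoughRootsOfUnity M (Monoid.exponent G)]
    {H : Subgroup G} (hH : H ≠ ⊥) : ∃ φ : G →* Mˣ, H.map φ ≠ ⊥ := by
  obtain ⟨a, ha⟩ := Subgroup.ne_bot_iff_exists_ne_one.mp hH
  obtain ⟨φ, hφ⟩ := CommGroup.exists_apply_ne_one_of_hasEnoughRootsOfUnity G M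
    (OneMemClass.coe_eq_one.not.mpr ha)
  exact ⟨φ, fun hmap ↦ hφ ((H.map_eq_bot_iff.mp hmap) a.2)⟩

/-- In a finite abelian `p`-group `G`, for any nontrivial subgroup `H` there is a
subgroup `N` with `G/N` cyclic and `|H : H ∩ N| = p`. -/
theorem stmt11 {G : Type*} [CommGroup G] [Finite G] (p : ℕ) (hp : p.Prime)
    (hG : IsPGroup p G) (H : Subgroup G) (hH : ⊥ < H) :
    ∃ N : Subgroup G, IsCyclic (G ⧸ N) ∧ N.relIndex H = p := by
  have : Fact p.Prime := ⟨hp⟩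
  have : NeZero (Monoid.exponent G) := ⟨Monoid.exponent_ne_zero_of_finite⟩
  obtain ⟨φ, hφ⟩ := CommGroup.exists_map_ne_bot_of_hasEnoughRootsOfUnity G ℂ hH.ne'
  have : Finite (H.map φ) := Set.toFinite _ |>.image _
  obtain ⟨m, hm⟩ := ((hG.to_subgroup H).map φ).exists_card_map_powMonoidHom_eq_prime hφ
  refine ⟨((powMonoidHom m).comp φ).ker, MonoidHom.isCyclic_quotient_ker_of_units _, ?_⟩
  rw [Subgroup.relIndex_ker, ← Subgroup.map_map, hm]
end

section
/- Let A be a group of automorphisms of a finite abelian p-group P with gcd(|A|, p) = 1. Then P = [P, A] × C_P(A). -/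
/-- `[P, A]` for a group `A` of automorphisms of `P` : the subgroup generated by the
elements `g⁻¹ · a(g)`. -/
def autCommutatorSubgroup {P : Type*} [Group P] (A : Subgroup (MulAut P)) : Subgroup P :=
  Subgroup.closure {x | ∃ (g : P) (a : MulAut P), a ∈ A ∧ x = g⁻¹ * a g}

/-- `C_P(A)` : the subgroup of fixed points of a group `A` of automorphisms of `P`. -/
def autFixedSubgroup {P : Type*} [Group P] (A : Subgroup (MulAut P)) : Subgroup P where
  carrier := {x | ∀ a ∈ A, a x = x}
  one_mem' := fun a _ => map_one a
  mul_mem' := fun hx hy a ha => by rw [map_mul, hx a ha, hy a ha]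
  inv_mem' := fun hx a ha => by rw [map_inv, hx a ha]

/-- Coprime action decomposition: if `A` is a `p'`-group of automorphisms of a finite
abelian `p`-group `P`, then `P = [P, A] × C_P(A)`. -/
theorem stmt12 {P : Type*} [CommGroup P] [Finite P] (p : ℕ) (hp : p.Prime)
    (hP : IsPGroup p P) (A : Subgroup (MulAut P))
    (hA : Nat.Coprime (Nat.card A) p) :
    autCommutatorSubgroup A ⊓ autFixedSubgroup A = ⊥ ∧
    autCommutatorSubgroup A ⊔ autFixedSubgroup A = ⊤ := by
  haveI : Finite (MulAut P) := by
    exact Finite.of_injective (fun a => (a : P ≃ P)) (fun a b h => MulEquiv.toEquiv_injective h)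
  haveI : Fintype A := Fintype.ofFinite A
  set n := Nat.card A with hn
  -- the transfer/average map
  let T : P →* P :=
    { toFun := fun x => ∏ a : A, (a : MulAut P) x
      map_one' := by simp
      map_mul' := fun x y => by simp [map_mul, Finset.prod_mul_distrib] }
  have hTdef : ∀ x, T x = ∏ a : A, (a : MulAut P) x := fun _ => rfl
  -- T is A-invariant
  have hTinv : ∀ b ∈ A, ∀ x : P, T ((b : MulAut P) x) = T x := by
    intro b hb x
    rw [hTdef, hTdef]
    calc ∏ a : A, (a : MulAut P) (b x) = ∏ a : A, ((a * ⟨b, hb⟩ : A) : MulAut P) x := by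
          simp [MulAut.mul_apply]
      _ = ∏ a : A, (a : MulAut P) x := Equiv.prod_comp (Equiv.mulRight (⟨b, hb⟩ : A))
            (fun a : A => (a : MulAut P) x)
  -- T lands in fixed points
  have hTfix : ∀ x : P, T x ∈ autFixedSubgroup A := by
    intro x b hb
    rw [hTdef]
    rw [map_prod]
    calc ∏ a : A, (b : MulAut P) ((a : MulAut P) x)
        = ∏ a : A, (((⟨b, hb⟩ : A) * a : A) : MulAut P) x := by simp [MulAut.mul_apply]
      _ = ∏ a : A, (a : MulAut P) x := Equiv.prod_comp (Equiv.mulLeft (⟨b, hb⟩ : A))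
            (fun a : A => (a : MulAut P) x)
  -- on fixed points T is x ^ n
  have hTC : ∀ x ∈ autFixedSubgroup A, T x = x ^ n := by
    intro x hx
    rw [hTdef]
    have : ∀ a : A, (a : MulAut P) x = x := fun a => hx a a.2
    simp [this, hn, Nat.card_eq_fintype_card]
  -- T kills [P, A]
  have hTcomm : autCommutatorSubgroup A ≤ T.ker := by
    rw [autCommutatorSubgroup, Subgroup.closure_le]
    rintro x ⟨g, a, ha, rfl⟩
    simp only [SetLike.mem_coe, MonoidHom.mem_ker, map_mul, map_inv]
    rw [hTinv a ha g, inv_mul_cancel]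
  constructor
  · rw [eq_bot_iff]
    intro x ⟨hx1, hx2⟩
    have h1 : x ^ n = 1 := by
      rw [← hTC x hx2]
      exact hTcomm hx1
    have h2 := hP x
    obtain ⟨k, hk⟩ := h2
    have hdvd1 : orderOf x ∣ n := orderOf_dvd_of_pow_eq_one h1
    have hdvd2 : orderOf x ∣ p ^ k := orderOf_dvd_of_pow_eq_one hk
    have hcop : Nat.Coprime n (p ^ k) := hA.pow_right k
    have : orderOf x ∣ 1 := hcop ▸ Nat.dvd_gcd hdvd1 hdvd2
    have : x = 1 := orderOf_eq_one_iff.mp (Nat.eq_one_of_dvd_one this)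
    simp [this]
  · rw [eq_top_iff]
    intro x _
    have hcard : Nat.Coprime (Nat.card P) n := by
      haveI : Fact p.Prime := ⟨hp⟩
      obtain ⟨m, hm⟩ := IsPGroup.iff_card.mp hP
      rw [hm]
      exact (hA.pow_right m).symm
    obtain ⟨y, hy⟩ := (powCoprime hcard).surjective x
    have key : ∏ a : A, (y⁻¹ * (a : MulAut P) y) = y⁻¹ ^ n * T y := by
      rw [Finset.prod_mul_distrib, Finset.prod_const, hTdef]
      simp [hn, Nat.card_eq_fintype_card]
    have hmem : (∏ a : A, (y⁻¹ * (a : MulAut P) y)) ∈ autCommutatorSubgroup A := by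
      apply Subgroup.prod_mem
      intro a _
      exact Subgroup.subset_closure ⟨y, a, a.2, rfl⟩
    rw [key] at hmem
    have hx : x = (y⁻¹ ^ n * T y)⁻¹ * T y := by
      have : y ^ n = x := hy
      rw [← this, mul_inv, inv_pow, inv_inv, mul_assoc, inv_mul_cancel, mul_one]
    rw [hx]
    exact mul_mem (Subgroup.mem_sup_left (inv_mem hmem))
      (Subgroup.mem_sup_right (hTfix y))
end

section
/- Let G = G' ⋊ A where G' (the commutator subgroup) is an abelian p-group and A is an abelian p'-group. Then G' = [G', A] and C_{G'}(A) = 1. -/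
/-!
Write `N = G'`. Since `G = N ⊔ A` with `N` and `A` abelian, the subgroup `⁅N, A⁆` is normalized by
both factors, hence normal, and modulo it the images of `N` and `A` commute, so `G / ⁅N, A⁆` is
abelian and `G' = ⁅N, A⁆`. For the second claim, the norm map `x ↦ ∏_{a ∈ A} a x a⁻¹` is an
endomorphism of the abelian group `N` that kills every commutator `⁅n, a⁆`, hence all of `⁅N, A⁆`,
and acts on `C_N(A)` as `x ↦ x ^ |A|`, which is injective on a `p`-group when `p ∤ |A|`.
-/

-- makes `N` a `CommGroup` from `IsMulCommutative N`, so that homomorphisms `N →* N` can be multiplied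
open scoped IsMulCommutative

namespace Subgroup

variable {G : Type*} [Group G]

theorem commutator_le_iff_map_le_centralizer (H K L : Subgroup G) [L.Normal] :
    ⁅H, K⁆ ≤ L ↔ H.map (QuotientGroup.mk' L) ≤ centralizer (K.map (QuotientGroup.mk' L)) := by
  rw [← commutator_eq_bot_iff_le_centralizer, ← map_commutator, map_eq_bot_iff,
    QuotientGroup.ker_mk']

theorem sup_commutator_le_iff (H₁ H₂ K L : Subgroup G) [L.Normal] :
    ⁅H₁ ⊔ H₂, K⁆ ≤ L ↔ ⁅H₁, K⁆ ≤ L ∧ ⁅H₂, K⁆ ≤ L := by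
  simp only [commutator_le_iff_map_le_centralizer, map_sup, sup_le_iff]

theorem normal_commutator_of_sup_eq_top {H K : Subgroup G} (hHK : H ⊔ K = ⊤) :
    (⁅H, K⁆ : Subgroup G).Normal := by
  rw [← normalizer_eq_top_iff, eq_top_iff, ← hHK]
  exact sup_le (normalizer_commutator_ge_left H K) (normalizer_commutator_ge_right H K)

theorem commutator_self_eq_bot (H : Subgroup G) [IsMulCommutative H] : ⁅H, H⁆ = ⊥ :=
  commutator_eq_bot_iff_le_centralizer.mpr H.le_centralizer

theorem commutator_eq_of_sup_eq_top {H K : Subgroup G} [IsMulCommutative H] [IsMulCommutative K]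
    (hHK : H ⊔ K = ⊤) : _root_.commutator G = ⁅H, K⁆ := by
  have := normal_commutator_of_sup_eq_top hHK
  refine le_antisymm ?_ (_root_.commutator_def G ▸ commutator_mono le_top le_top)
  have hH : ⁅H ⊔ K, H⁆ ≤ ⁅H, K⁆ := by
    rw [sup_commutator_le_iff, commutator_self_eq_bot, commutator_comm K H]
    exact ⟨bot_le, le_rfl⟩
  have hK : ⁅H ⊔ K, K⁆ ≤ ⁅H, K⁆ := by
    rw [sup_commutator_le_iff, commutator_self_eq_bot]
    exact ⟨le_rfl, bot_le⟩
  rw [_root_.commutator_def, ← hHK, sup_commutator_le_iff, commutator_comm H, commutator_comm K]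
  exact ⟨hH, hK⟩

section ConjNorm

variable (N : Subgroup G) [N.Normal] [IsMulCommutative N] (A : Subgroup G) [Fintype A]

noncomputable def conjNorm : N →* N :=
  ∏ a : A, (MulAut.conjNormal (H := N) a).toMonoidHom

variable {N A}

theorem conjNorm_apply (x : N) : conjNorm N A x = ∏ a : A, MulAut.conjNormal (a : G) x :=
  MonoidHom.finsetProd_apply _ _ _

theorem conjNorm_conjNormal (a : A) (x : N) :
    conjNorm N A (MulAut.conjNormal (a : G) x) = conjNorm N A x := by
  simp only [conjNorm_apply, ← MulAut.mul_apply, ← map_mul, ← coe_mul]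
  exact Fintype.prod_equiv (Equiv.mulRight a) _ _ fun _ ↦ rfl

theorem commutator_le_map_ker_conjNorm : ⁅N, A⁆ ≤ (conjNorm N A).ker.map N.subtype := by
  rw [commutator_le]
  intro n hn a ha
  refine ⟨⟨n, hn⟩ * (MulAut.conjNormal a ⟨n, hn⟩)⁻¹, ?_, ?_⟩
  · rw [SetLike.mem_coe, MonoidHom.mem_ker, map_mul, map_inv, conjNorm_conjNormal ⟨a, ha⟩,
      mul_inv_cancel]
  · simp [commutatorElement_def, mul_assoc]

theorem conjNorm_eq_pow_of_mem_centralizer {x : N} (hx : (x : G) ∈ centralizer A) :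
    conjNorm N A x = x ^ Nat.card A := by
  have hfix (a : A) : MulAut.conjNormal (a : G) x = x := by
    ext
    rw [MulAut.conjNormal_apply, mem_centralizer_iff.mp hx a a.2, mul_inv_cancel_right]
  rw [conjNorm_apply, Finset.prod_congr rfl fun a _ ↦ hfix a, Finset.prod_const,
    Finset.card_univ, Nat.card_eq_fintype_card]

theorem centralizer_inf_commutator_eq_bot {p : ℕ} (hN : IsPGroup p N)
    (hA : p.Coprime (Nat.card A)) :
    centralizer A ⊓ ⁅N, A⁆ = ⊥ := by
  rw [eq_bot_iff]
  rintro _ ⟨hc, hcL⟩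
  obtain ⟨x, hx, rfl⟩ := commutator_le_map_ker_conjNorm hcL
  have hpow : x ^ Nat.card A = 1 ^ Nat.card A := by
    rw [← conjNorm_eq_pow_of_mem_centralizer hc, hx, one_pow]
  rw [(hN.powEquiv hA).injective hpow]
  exact one_mem _

end ConjNorm

end Subgroup

theorem stmt13_general {G : Type*} [Group G] [Finite G] (p : ℕ) (hp : p.Prime)
    (A : Subgroup G)
    (hGp : IsPGroup p ↥(commutator G)) (hGc : IsMulCommutative ↥(commutator G))
    (hAc : IsMulCommutative ↥A) (hAp : ¬ p ∣ Nat.card A)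
    (h2 : commutator G ⊔ A = ⊤) :
    commutator G = ⁅commutator G, A⁆ ∧
    Subgroup.centralizer (A : Set G) ⊓ commutator G = ⊥ := by
  have : Fintype A := Fintype.ofFinite A
  have hG' : commutator G = ⁅commutator G, A⁆ := Subgroup.commutator_eq_of_sup_eq_top h2
  refine ⟨hG', ?_⟩
  rw [hG']
  exact Subgroup.centralizer_inf_commutator_eq_bot hGp (hp.coprime_iff_not_dvd.mpr hAp)

/-- If `G = G' ⋊ A` with `G'` an abelian `p`-group and `A` an abelian `p'`-group, then
`G' = [G', A]` and `C_{G'}(A) = 1`. -/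
theorem stmt13 {G : Type*} [Group G] [Finite G] (p : ℕ) (hp : p.Prime)
    (A : Subgroup G)
    (hGp : IsPGroup p ↥(commutator G)) (hGc : IsMulCommutative ↥(commutator G))
    (hAc : IsMulCommutative ↥A) (hAp : ¬ p ∣ Nat.card A)
    (h1 : commutator G ⊓ A = ⊥) (h2 : commutator G ⊔ A = ⊤) :
    commutator G = ⁅commutator G, A⁆ ∧
    Subgroup.centralizer (A : Set G) ⊓ commutator G = ⊥ :=
  stmt13_general p hp A hGp hGc hAc hAp h2
end

section
/- Let G = P ⋊ Q where P is an abelian p-group, Q an abelian q-group, p ≠ q primes. If Ω₁(P) (the subgroup of elements of order dividing p) is a minimal normal subgroup of G, then C_P(a) = 1 for every a ∈ Q \ Z(G). -/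
/-!
Since `P` and `Q` are abelian and `G = PQ`, the centralizer `C_P(a)` is normal in `G`. If it were
nontrivial it would meet `Ω₁(P)` nontrivially, and minimality would give `Ω₁(P) ≤ C_P(a)`. But an
automorphism of order prime to `p` of an abelian `p`-group that is trivial on `Ω₁` is trivial, so
`a` would centralize both `P` and `Q`, i.e. be central.
-/

/-- `Ω₁(P)` for an abelian subgroup `P` : the elements of `P` of order dividing `p`. -/
def Omega1 {G : Type*} [Group G] (p : ℕ) (P : Subgroup G) [IsMulCommutative P] :
    Subgroup G where
  carrier := {x | x ∈ P ∧ x ^ p = 1}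
  one_mem' := ⟨P.one_mem, one_pow p⟩
  mul_mem' := fun {a b} ha hb => ⟨P.mul_mem ha.1 hb.1, by
    have h : Commute a b := Subgroup.mul_comm_of_mem_isMulCommutative (H := P) ha.1 hb.1
    rw [h.mul_pow, ha.2, hb.2, one_mul]⟩
  inv_mem' := fun {a} ha => ⟨P.inv_mem ha.1, by rw [inv_pow, ha.2, inv_one]⟩

open scoped IsMulCommutative

lemma exists_ne_one_pow_eq_one_of_pow_pow_eq_one {M : Type*} [Monoid M] {p : ℕ} {z : M}
    (hz : z ≠ 1) {k : ℕ} (hk : z ^ p ^ k = 1) : ∃ m, z ^ p ^ m ≠ 1 ∧ (z ^ p ^ m) ^ p = 1 := by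
  induction k with
  | zero => exact absurd (by simpa using hk) hz
  | succ k ih =>
    by_cases hzk : z ^ p ^ k = 1
    · exact ih hzk
    · exact ⟨k, hzk, by rwa [← pow_mul, ← pow_succ]⟩

namespace MulAut

variable {A : Type*} [CommGroup A] (σ : MulAut A)

lemma pow_apply_eq_mul_pow {y u : A} (hu : σ u = u) (hy : σ y = y * u) (i : ℕ) :
    (σ ^ i) y = y * u ^ i := by
  induction i with
  | zero => simp
  | succ i ih => rw [pow_succ', mul_apply, ih, map_mul, map_pow, hy, hu, pow_succ', mul_assoc]

/-- Induction on `k`: if `σ` fixes `y ^ p`, then `σ y = y * u` with `u ^ p = 1`, so `u` is fixed,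
`σ ^ i` multiplies `y` by `u ^ i`, and `σ ^ n = 1` forces `u ^ n = 1`. -/
lemma apply_eq_self_of_pow_pow_eq_one {p n : ℕ} (hpn : p.Coprime n) (hσ : σ ^ n = 1)
    (hfix : ∀ u : A, u ^ p = 1 → σ u = u) (k : ℕ) (y : A) (hy : y ^ p ^ k = 1) : σ y = y := by
  induction k generalizing y with
  | zero => rw [pow_zero, pow_one] at hy; rw [hy, map_one]
  | succ k ih =>
    set u := σ y * y⁻¹ with hu
    have hyp : σ (y ^ p) = y ^ p := ih _ (by rwa [← pow_mul, ← pow_succ'])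
    have hup : u ^ p = 1 := by rw [hu, mul_pow, ← map_pow, hyp, inv_pow, mul_inv_cancel]
    have hσy : σ y = y * u := by rw [hu, mul_comm, inv_mul_cancel_right]
    have hun : u ^ n = 1 := by
      simpa [hσ] using (pow_apply_eq_mul_pow σ (hfix u hup) hσy n).symm
    rw [hσy, (pow_eq_one_iff_of_coprime hpn).mp ⟨hup, hun⟩, mul_one]

end MulAut

namespace Subgroup

variable {G : Type*} [Group G]

lemma le_of_inf_ne_bot_of_minimal_normal {W K : Subgroup G} [W.Normal] [K.Normal]
    (hmin : ∀ N : Subgroup G, N.Normal → N < W → N = ⊥) (hWK : W ⊓ K ≠ ⊥) : W ≤ K := by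
  by_contra hle
  exact hWK (hmin _ inferInstance (inf_lt_left.mpr hle))

lemma le_centralizer_singleton_of_mem (Q : Subgroup G) [IsMulCommutative Q] {a : G} (ha : a ∈ Q) :
    Q ≤ centralizer {a} :=
  (le_centralizer Q).trans (centralizer_le (Set.singleton_subset_iff.mpr ha))

lemma normal_inf_centralizer_singleton {P Q : Subgroup G} [P.Normal] [IsMulCommutative P]
    [IsMulCommutative Q] (hPQ : P ⊔ Q = ⊤) {a : G} (ha : a ∈ Q) :
    (P ⊓ centralizer {a}).Normal := by
  rw [← normalizer_eq_top_iff, eq_top_iff, ← hPQ]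
  refine sup_le ((le_centralizer P).trans ((centralizer_le inf_le_left).trans
    (centralizer_le_normalizer _))) (le_trans ?_ inf_normalizer_le_normalizer_inf)
  rw [normalizer_eq_top]
  exact le_inf le_top ((le_centralizer_singleton_of_mem Q ha).trans le_normalizer)

lemma le_centralizer_of_omega1_le {P : Subgroup G} [P.Normal] [IsMulCommutative P] {p n : ℕ}
    (hP : IsPGroup p P) (hpn : p.Coprime n) {a : G} (ha : a ^ n = 1)
    (hW : Omega1 p P ≤ centralizer {a}) : P ≤ centralizer {a} := by
  have hσ : MulAut.conjNormal a ^ n = (1 : MulAut P) := by rw [← map_pow, ha, map_one]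
  have hfix : ∀ u : P, u ^ p = 1 → MulAut.conjNormal a u = u := fun u hu ↦ by
    have hua := mem_centralizer_singleton_iff.mp (hW ⟨u.2, congrArg Subtype.val hu⟩)
    ext
    rw [MulAut.conjNormal_apply, ← hua, mul_inv_cancel_right]
  intro y hy
  obtain ⟨k, hk⟩ := hP ⟨y, hy⟩
  have hya : a * y * a⁻¹ = y := by
    simpa using congrArg Subtype.val
      (MulAut.apply_eq_self_of_pow_pow_eq_one _ hpn hσ hfix k ⟨y, hy⟩ hk)
  exact mem_centralizer_singleton_iff.mpr (mul_inv_eq_iff_eq_mul.mp hya).symm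

end Subgroup

theorem stmt14_general {G : Type*} [Group G] (p q : ℕ)
    (hp : p.Prime) (hq : q.Prime) (hpq : p ≠ q)
    (P Q : Subgroup G) [IsMulCommutative P] (hQc : IsMulCommutative Q)
    (hPp : IsPGroup p ↥P) (hQq : IsPGroup q ↥Q) (hPn : P.Normal)
    (h2 : P ⊔ Q = ⊤)
    (hW1 : (Omega1 p P).Normal)
    (hWmin : ∀ N : Subgroup G, N.Normal → N < Omega1 p P → N = ⊥) :
    ∀ a ∈ Q, a ∉ Subgroup.center G → ∀ x ∈ P, a * x = x * a → x = 1 := by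
  open Subgroup in
  intro a haQ haZ x hxP hax
  by_contra hx
  have : (P ⊓ centralizer {a}).Normal := normal_inf_centralizer_singleton h2 haQ
  obtain ⟨k, hk⟩ := hPp ⟨x, hxP⟩
  obtain ⟨m, hw, hwp⟩ :=
    exists_ne_one_pow_eq_one_of_pow_pow_eq_one hx (k := k) (by simpa using congrArg Subtype.val hk)
  have hwC : x ^ p ^ m ∈ Omega1 p P ⊓ (P ⊓ centralizer {a}) :=
    ⟨⟨P.pow_mem hxP _, hwp⟩, P.pow_mem hxP _,
      mem_centralizer_singleton_iff.mpr ((Commute.pow_right hax _).eq.symm)⟩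
  have hWC : Omega1 p P ≤ P ⊓ centralizer {a} :=
    le_of_inf_ne_bot_of_minimal_normal hWmin
      (ne_bot_iff_exists_ne_one.mpr ⟨⟨_, hwC⟩, fun h ↦ hw (congrArg Subtype.val h)⟩)
  obtain ⟨l, hl⟩ := hQq ⟨a, haQ⟩
  have hPa : P ≤ centralizer {a} :=
    le_centralizer_of_omega1_le hPp (((Nat.coprime_primes hp hq).mpr hpq).pow_right l)
      (by simpa using congrArg Subtype.val hl) (hWC.trans inf_le_right)
  have hGa : centralizer {a} = ⊤ :=
    top_le_iff.mp (h2 ▸ sup_le hPa (le_centralizer_singleton_of_mem Q haQ))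
  exact haZ (centralizer_eq_top_iff_subset.mp hGa rfl)

/-- If `G = P ⋊ Q` with `P` an abelian `p`-group, `Q` an abelian `q`-group, `p ≠ q`,
and `Ω₁(P)` is a minimal normal subgroup of `G`, then `C_P(a) = 1` for every
`a ∈ Q \ Z(G)`. -/
theorem stmt14 {G : Type*} [Group G] [Finite G] (p q : ℕ)
    (hp : p.Prime) (hq : q.Prime) (hpq : p ≠ q)
    (P Q : Subgroup G) [IsMulCommutative P] (hQc : IsMulCommutative Q)
    (hPp : IsPGroup p ↥P) (hQq : IsPGroup q ↥Q) (hPn : P.Normal)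
    (h1 : P ⊓ Q = ⊥) (h2 : P ⊔ Q = ⊤)
    (hW1 : (Omega1 p P).Normal) (hW2 : Omega1 p P ≠ ⊥)
    (hWmin : ∀ N : Subgroup G, N.Normal → N < Omega1 p P → N = ⊥) :
    ∀ a ∈ Q, a ∉ Subgroup.center G → ∀ x ∈ P, a * x = x * a → x = 1 :=
  stmt14_general p q hp hq hpq P Q hQc hPp hQq hPn h2 hW1 hWmin
end

section
/- Let G be a finite p-group of maximal class having an abelian subgroup A of index p. Then every non-abelian subgroup of G is of maximal class. -/
/-!
Let `B` be an abelian normal subgroup of prime index of `K` and `h ∉ B`, so that `K = B ⟨h⟩`.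
Then `ψ : b ↦ ⁅b, h⁆` is a homomorphism from `B` with kernel `C_B(h)` and image `K'`, and it maps
`γᵢ(K)` into `γᵢ₊₁(K)`; hence `|γᵢ(K) : γᵢ₊₁(K)| ≤ |C_B(h)|` for `i ≥ 1`.

In `G` of maximal class with `|G| = pⁿ` we have `|G'| ≥ pⁿ⁻²` and `|A| = pⁿ⁻¹`, so
`|C_A(h)| ≤ p` for every `h ∉ A`. If `H ≤ G` is non-abelian of order `pᵐ`, pick `h ∈ H \ A` and
put `B = A ∩ H`, of index `p` in `H`. Now `C_B(h) ≤ C_A(h)` has order exactly `p`: were it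
trivial, no `γᵢ(H)` with `i ≥ 1` could be smaller than `H' = ψ(B) = B ≠ 1`, contradicting
nilpotency. So `|H'| = pᵐ⁻²` and each of the factors `γᵢ(H)/γᵢ₊₁(H)`, `i ≥ 1`, has order at most
`p`, which forces the class of `H` to be exactly `m - 1`.
-/

open Subgroup
open scoped commutatorElement

theorem le_pow_mul_of_le_mul_succ {a : ℕ → ℕ} {c : ℕ} (h : ∀ l, a l ≤ c * a (l + 1)) (k : ℕ) :
    a 0 ≤ c ^ k * a k := by
  induction k with
  | zero => simp
  | succ k ih =>
    calc a 0 ≤ c ^ k * a k := ih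
      _ ≤ c ^ k * (c * a (k + 1)) := Nat.mul_le_mul_left _ (h k)
      _ = c ^ (k + 1) * a (k + 1) := by ring

theorem sup_zpowers_eq_top_of_index_prime {K : Type*} [Group K] {B : Subgroup K}
    (hB : B.index.Prime) {h : K} (hh : h ∉ B) : B ⊔ zpowers h = ⊤ := by
  have hmul := relIndex_mul_index (le_sup_left : B ≤ B ⊔ zpowers h)
  rcases (Nat.dvd_prime hB).mp (Dvd.intro_left _ hmul) with hone | hfull
  · exact index_eq_one.mp hone
  · rw [hfull, mul_eq_right₀ hB.ne_zero, relIndex_eq_one] at hmul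
    exact absurd (hmul (mem_sup_right (mem_zpowers h))) hh

theorem relIndex_eq_index_of_not_le {G : Type*} [Group G] {A : Subgroup G} [A.Normal]
    (hA : A.index.Prime) {H : Subgroup G} (hH : ¬ H ≤ A) : A.relIndex H = A.index :=
  ((Nat.dvd_prime hA).mp (relIndex_dvd_index_of_normal A H)).resolve_left
    (mt relIndex_eq_one.mp hH)

theorem isMulCommutative_of_closure_eq_top {Q : Type*} [Group Q] {S : Set Q}
    (hS : closure S = ⊤) (hcomm : ∀ x ∈ S, ∀ y ∈ S, x * y = y * x) : IsMulCommutative Q := by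
  rw [← center_eq_top_iff, eq_top_iff, ← centralizer_univ, ← coe_top, ← hS, centralizer_closure,
    closure_le]
  exact fun x hx y hy => hcomm y hy x hx

theorem card_le_card_ker_mul_card_map {M N : Type*} [Group M] [Group N] [Finite M] (f : M →* N)
    (S : Subgroup M) : Nat.card S ≤ Nat.card f.ker * Nat.card (S.map f) := by
  rw [← card_mul_index (f.ker.subgroupOf S), ← relIndex, relIndex_ker]
  refine Nat.mul_le_mul_right _ ?_
  rw [← card_map_of_injective S.subtype_injective, subgroupOf_map_subtype]
  exact card_le_of_le inf_le_left

theorem card_subgroupOf_inf_centralizer_le {G : Type*} [Group G] [Finite G] (A H : Subgroup G)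
    (h : H) : Nat.card (A.subgroupOf H ⊓ centralizer {h} : Subgroup H) ≤
      Nat.card (A ⊓ centralizer {(h : G)} : Subgroup G) := by
  rw [← card_map_of_injective H.subtype_injective]
  refine card_le_of_le ?_
  rintro _ ⟨x, ⟨hxA, hxh⟩, rfl⟩
  exact ⟨hxA, mem_centralizer_singleton_iff.mpr
    (congrArg Subtype.val (mem_centralizer_singleton_iff.mp hxh))⟩

theorem lowerCentralSeries_succ_lt {K : Type*} [Group K] [Group.IsNilpotent K] {j : ℕ}
    (hj : (⊤ : Subgroup K).lowerCentralSeries j ≠ ⊥) :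
    (⊤ : Subgroup K).lowerCentralSeries (j + 1) < (⊤ : Subgroup K).lowerCentralSeries j := by
  refine lt_of_le_of_ne ((⊤ : Subgroup K).lowerCentralSeries_antitone j.le_succ) fun heq => hj ?_
  have hconst : ∀ k, (⊤ : Subgroup K).lowerCentralSeries (j + k) =
      (⊤ : Subgroup K).lowerCentralSeries j := by
    intro k
    induction k with
    | zero => rfl
    | succ k ih =>
      rw [← add_assoc, Subgroup.lowerCentralSeries_succ, ih, ← Subgroup.lowerCentralSeries_succ,
        heq]
  rw [← hconst (Group.nilpotencyClass K), eq_bot_iff,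
    ← Subgroup.lowerCentralSeries_nilpotencyClass]
  exact (⊤ : Subgroup K).lowerCentralSeries_antitone (Nat.le_add_left _ _)

namespace IsPGroup

variable {p : ℕ} [hp : Fact p.Prime] {K : Type*} [Group K] [Finite K]

theorem mul_card_le_card_of_lt (hK : IsPGroup p K) {S T : Subgroup K} (hST : S < T) :
    p * Nat.card S ≤ Nat.card T := by
  have hrel : Nat.card S * S.relIndex T = Nat.card T := by
    rw [← relIndex_bot_left, ← relIndex_bot_left T, relIndex_mul_relIndex _ _ _ bot_le hST.le]
  obtain ⟨k, hk⟩ := (hK.to_subgroup T).index (S.subgroupOf T)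
  have hk0 : k ≠ 0 := by
    rintro rfl
    exact hST.not_ge (relIndex_eq_one.mp hk)
  rw [← hrel, mul_comm, relIndex, hk]
  exact Nat.mul_le_mul_left _ (Nat.le_self_pow hk0 p)

theorem normal_of_index_eq (hK : IsPGroup p K) {B : Subgroup K} (hB : B.index = p) :
    B.Normal := by
  obtain ⟨n, hn⟩ := IsPGroup.iff_card.mp hK
  apply normal_of_index_eq_minFac_card
  rw [hB, hn, hp.out.pow_minFac]
  rintro rfl
  have := index_dvd_card B
  rw [hB, hn, pow_zero, Nat.dvd_one] at this
  exact hp.out.one_lt.ne' this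

theorem pow_succ_le_card_lowerCentralSeries (hK : IsPGroup p K) {j k : ℕ}
    (h : (⊤ : Subgroup K).lowerCentralSeries (j + k) ≠ ⊥) :
    p ^ (k + 1) ≤ Nat.card ((⊤ : Subgroup K).lowerCentralSeries j) := by
  have := hK.isNilpotent
  induction k generalizing j with
  | zero =>
    rcases (hK.to_subgroup _).card_eq_or_dvd with h1 | hdvd
    · exact absurd (card_eq_one.mp h1) h
    · simpa using Nat.le_of_dvd Nat.card_pos hdvd
  | succ k ih =>
    have hj : (⊤ : Subgroup K).lowerCentralSeries j ≠ ⊥ := fun hbot =>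
      h (eq_bot_iff.mpr (hbot ▸ (⊤ : Subgroup K).lowerCentralSeries_antitone
        (Nat.le_add_right _ _)))
    calc p ^ (k + 1 + 1) = p * p ^ (k + 1) := pow_succ' _ _
      _ ≤ p * Nat.card ((⊤ : Subgroup K).lowerCentralSeries (j + 1)) :=
        Nat.mul_le_mul_left _ (ih (by rwa [add_right_comm, add_assoc]))
      _ ≤ _ := hK.mul_card_le_card_of_lt (lowerCentralSeries_succ_lt hj)

end IsPGroup

section CommutatorHom

variable {K : Type*} [Group K] (B : Subgroup K) [B.Normal] (h : K)

theorem commutatorElement_mem_of_normal {b : K} (hb : b ∈ B) : ⁅b, h⁆ ∈ B :=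
  commutator_le_left B ⊤ (commutator_mem_commutator hb (mem_top h))

variable [IsMulCommutative B]

def commutatorHom : B →* K where
  toFun b := ⁅(b : K), h⁆
  map_one' := commutatorElement_one_left h
  map_mul' b c := by
    have hc := commutatorElement_mem_of_normal B h c.2
    simp only [coe_mul, commutatorElement_mul_left_eq_conj_mul, setLike_mul_comm b.2 hc,
      mul_inv_cancel_right, setLike_mul_comm hc (commutatorElement_mem_of_normal B h b.2)]

@[simp]
theorem commutatorHom_apply (b : B) : commutatorHom B h b = ⁅(b : K), h⁆ := rfl

theorem range_commutatorHom_le : (commutatorHom B h).range ≤ B := by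
  rintro _ ⟨b, rfl⟩
  exact commutatorElement_mem_of_normal B h b.2

theorem commutatorHom_mem_lowerCentralSeries_succ {l : ℕ} {b : B}
    (hb : (b : K) ∈ (⊤ : Subgroup K).lowerCentralSeries l) :
    commutatorHom B h b ∈ (⊤ : Subgroup K).lowerCentralSeries (l + 1) :=
  commutator_mem_commutator hb (mem_top h)

theorem ker_commutatorHom : (commutatorHom B h).ker = (centralizer {h}).subgroupOf B := by
  ext b
  simp [mem_subgroupOf, mem_centralizer_singleton_iff, commutatorElement_eq_one_iff_mul_comm]

theorem card_ker_commutatorHom :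
    Nat.card (commutatorHom B h).ker = Nat.card (B ⊓ centralizer {h} : Subgroup K) := by
  rw [ker_commutatorHom, ← inf_subgroupOf_left]
  exact Nat.card_congr (subgroupOfEquivOfLe inf_le_left).toEquiv

variable {B h}

theorem conj_commutatorHom {k : K} (hk : Commute k h) (b : B) :
    k * commutatorHom B h b * k⁻¹ =
      commutatorHom B h ⟨k * b * k⁻¹, Normal.conj_mem ‹_› _ b.2 k⟩ := by
  rw [commutatorHom_apply, conjugate_commutatorElement, hk.eq, mul_inv_cancel_right]
  rfl

theorem normal_range_commutatorHom (hgen : B ⊔ zpowers h = ⊤) :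
    (commutatorHom B h).range.Normal := by
  set R := (commutatorHom B h).range
  have hconj : ∀ k, Commute k h → ∀ x ∈ R, k * x * k⁻¹ ∈ R := by
    rintro k hk _ ⟨b, rfl⟩
    exact conj_commutatorHom hk b ▸ ⟨_, rfl⟩
  have hB : B ≤ normalizer (R : Set K) := by
    rw [le_normalizer_iff_commutator_le_right, commutator_eq_bot_iff_le_centralizer.mpr]
    · exact bot_le
    · exact (le_centralizer B).trans (centralizer_le (range_commutatorHom_le B h))
  have hh : h ∈ normalizer (R : Set K) := by
    refine mem_normalizer_iff.mpr fun x => ⟨hconj h (Commute.refl h) x, fun hx => ?_⟩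
    simpa [mul_assoc] using hconj h⁻¹ (Commute.refl h).inv_left _ hx
  rw [← normalizer_eq_top_iff, eq_top_iff, ← hgen]
  exact sup_le hB (zpowers_le.mpr hh)

theorem range_commutatorHom_eq (hgen : B ⊔ zpowers h = ⊤) :
    (commutatorHom B h).range = (⊤ : Subgroup K).lowerCentralSeries 1 := by
  set R := (commutatorHom B h).range
  refine le_antisymm ?_ ?_
  · rintro _ ⟨b, rfl⟩
    exact commutatorHom_mem_lowerCentralSeries_succ B h (mem_top _)
  have := normal_range_commutatorHom hgen
  rw [top_lowerCentralSeries_one, ← Normal.quotient_commutative_iff_commutator_le]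
  have hcomm : ∀ x ∈ (B : Set K) ∪ {h}, ∀ y ∈ (B : Set K) ∪ {h}, ⁅x, y⁆ ∈ R := by
    have hBh : ∀ x ∈ B, ⁅x, h⁆ ∈ R := fun x hx => ⟨⟨x, hx⟩, rfl⟩
    rintro x (hx | rfl) y (hy | rfl)
    · rw [commutatorElement_eq_one_iff_mul_comm.mpr (setLike_mul_comm hx hy)]
      exact R.one_mem
    · exact hBh x hx
    · rw [← commutatorElement_inv]
      exact R.inv_mem (hBh y hy)
    · rw [commutatorElement_self]
      exact R.one_mem
  set π := QuotientGroup.mk' R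
  refine isMulCommutative_of_closure_eq_top (S := π '' ((B : Set K) ∪ {h})) ?_ ?_
  · rw [← MonoidHom.map_closure, Subgroup.closure_union, closure_eq, ← zpowers_eq_closure, hgen,
      map_top_of_surjective π (QuotientGroup.mk'_surjective R)]
  · rintro _ ⟨x, hx, rfl⟩ _ ⟨y, hy, rfl⟩
    rw [← commutatorElement_eq_one_iff_mul_comm, ← map_commutatorElement,
      QuotientGroup.mk'_apply, QuotientGroup.eq_one_iff]
    exact hcomm x hx y hy

theorem card_eq_card_ker_commutatorHom_mul (hgen : B ⊔ zpowers h = ⊤) :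
    Nat.card B = Nat.card (commutatorHom B h).ker *
      Nat.card ((⊤ : Subgroup K).lowerCentralSeries 1) := by
  rw [← range_commutatorHom_eq hgen, ← index_ker, card_mul_index]

theorem card_lowerCentralSeries_le_card_ker_commutatorHom_mul [Finite K]
    (hgen : B ⊔ zpowers h = ⊤) {l : ℕ} (hl : 1 ≤ l) :
    Nat.card ((⊤ : Subgroup K).lowerCentralSeries l) ≤ Nat.card (commutatorHom B h).ker *
      Nat.card ((⊤ : Subgroup K).lowerCentralSeries (l + 1)) := by
  set γ := (⊤ : Subgroup K).lowerCentralSeries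
  have hlB : γ l ≤ B :=
    ((⊤ : Subgroup K).lowerCentralSeries_antitone hl).trans
      (range_commutatorHom_eq hgen ▸ range_commutatorHom_le B h)
  calc Nat.card (γ l) = Nat.card ((γ l).subgroupOf B) :=
        (Nat.card_congr (subgroupOfEquivOfLe hlB).toEquiv).symm
    _ ≤ Nat.card (commutatorHom B h).ker *
          Nat.card (((γ l).subgroupOf B).map (commutatorHom B h)) :=
        card_le_card_ker_mul_card_map _ _
    _ ≤ _ := by
      gcongr
      exact card_le_of_le <| map_le_iff_le_comap.mpr
        fun _ hb => commutatorHom_mem_lowerCentralSeries_succ B h hb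

end CommutatorHom

section MaximalClass

variable {p : ℕ} [hp : Fact p.Prime]

theorem card_inf_centralizer_le_of_maximalClass {G : Type*} [Group G] [Finite G] {n : ℕ}
    (hG : Nat.card G = p ^ n) (hmax : ∀ l < n - 1, (⊤ : Subgroup G).lowerCentralSeries l ≠ ⊥)
    {A : Subgroup G} [IsMulCommutative A] (hA : A.index = p) {h : G} (hh : h ∉ A) :
    Nat.card (A ⊓ centralizer {h} : Subgroup G) ≤ p := by
  have hpG := IsPGroup.of_card hG
  have := hpG.normal_of_index_eq hA
  have hgen := sup_zpowers_eq_top_of_index_prime (hA ▸ hp.out) hh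
  set γ₁ := (⊤ : Subgroup G).lowerCentralSeries 1
  have hγ₁ : p ^ (n - 2) ≤ Nat.card γ₁ := by
    rcases le_or_gt n 2 with hn | hn
    · rw [Nat.sub_eq_zero_of_le hn, pow_zero]
      exact Nat.card_pos
    · have := hpG.pow_succ_le_card_lowerCentralSeries (j := 1) (k := n - 3) (hmax _ (by omega))
      rwa [show n - 3 + 1 = n - 2 by omega] at this
  have hcardA : Nat.card A * p = p ^ n := by rw [← hG, ← card_mul_index A, hA]
  rw [← card_ker_commutatorHom]
  refine Nat.le_of_mul_le_mul_left (c := p ^ (n - 2) * p * p) ?_ (by simp [hp.out.pos])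
  calc p ^ (n - 2) * p * p * Nat.card (commutatorHom A h).ker
      ≤ Nat.card (commutatorHom A h).ker * Nat.card γ₁ * p * p := by
        rw [mul_comm (p ^ (n - 2) * p * p), ← mul_assoc, ← mul_assoc]
        gcongr
    _ = p ^ n * p := by rw [← card_eq_card_ker_commutatorHom_mul hgen, hcardA]
    _ ≤ p ^ (n - 2) * p * p * p := by
        gcongr
        rw [← pow_succ, ← pow_succ]
        exact Nat.pow_le_pow_right hp.out.pos (by omega)

theorem lowerCentralSeries_maximalClass_of_card_inf_centralizer_le {K : Type*} [Group K]
    [Finite K] {m : ℕ} (hK : Nat.card K = p ^ m) (hm : 2 ≤ m) {B : Subgroup K}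
    [IsMulCommutative B] (hB : B.index = p) {h : K} (hh : h ∉ B)
    (hC : Nat.card (B ⊓ centralizer {h} : Subgroup K) ≤ p) :
    (⊤ : Subgroup K).lowerCentralSeries (m - 1) = ⊥ ∧
      ∀ l < m - 1, (⊤ : Subgroup K).lowerCentralSeries l ≠ ⊥ := by
  have hpK := IsPGroup.of_card hK
  have := hpK.normal_of_index_eq hB
  have := hpK.isNilpotent
  have hgen := sup_zpowers_eq_top_of_index_prime (hB ▸ hp.out) hh
  set γ := (⊤ : Subgroup K).lowerCentralSeries
  set c := Nat.card (commutatorHom B h).ker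
  have hcB : Nat.card B = c * Nat.card (γ 1) := card_eq_card_ker_commutatorHom_mul hgen
  have hcardB : Nat.card B = p ^ (m - 1) := by
    have := card_mul_index B
    rw [hB, hK, ← Nat.sub_add_cancel (by omega : 1 ≤ m), pow_succ] at this
    exact Nat.eq_of_mul_eq_mul_right hp.out.pos this
  have hdecay : ∀ k, Nat.card (γ 1) ≤ c ^ k * Nat.card (γ (k + 1)) :=
    le_pow_mul_of_le_mul_succ (a := fun l => Nat.card (γ (l + 1)))
      fun l => card_lowerCentralSeries_le_card_ker_commutatorHom_mul hgen (Nat.le_add_left 1 l)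
  have hc : c = p := by
    rcases ((hpK.to_subgroup B).to_subgroup (commutatorHom B h).ker).card_eq_or_dvd
      with hc1 | hdvd
    · replace hc1 : c = 1 := hc1
      have hbot : γ (Group.nilpotencyClass K + 1) = ⊥ :=
        Subgroup.lowerCentralSeries_eq_bot_iff_nilpotencyClass_le.mpr (Nat.le_succ _)
      have := hdecay (Group.nilpotencyClass K)
      rw [hbot, card_bot, mul_one, hc1, one_pow] at this
      have hp1 : p ^ (m - 1) ≤ 1 := by rw [← hcardB, hcB, hc1, one_mul]; exact this
      exact absurd hp1 (Nat.one_lt_pow (by omega) hp.out.one_lt).not_ge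
    · exact le_antisymm ((card_ker_commutatorHom B h).trans_le hC)
        (Nat.le_of_dvd Nat.card_pos hdvd)
  have hγ₁ : Nat.card (γ 1) = p ^ (m - 2) := by
    refine Nat.eq_of_mul_eq_mul_left hp.out.pos ?_
    rw [← hc, ← hcB, hcardB, hc, ← pow_succ', show m - 2 + 1 = m - 1 by omega]
  constructor
  · by_contra hne
    have := hpK.pow_succ_le_card_lowerCentralSeries (j := 1) (k := m - 2)
      (by rwa [show 1 + (m - 2) = m - 1 by omega])
    rw [hγ₁] at this
    exact absurd this (Nat.pow_lt_pow_right hp.out.one_lt (by omega)).not_ge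
  · intro l hl hbot
    cases l with
    | zero =>
      change (⊤ : Subgroup K) = ⊥ at hbot
      rw [← card_eq_one, card_top, hK] at hbot
      exact absurd hbot (Nat.one_lt_pow (by omega) hp.out.one_lt).ne'
    | succ k =>
      have := hdecay k
      rw [hγ₁, hbot, card_bot, mul_one, hc] at this
      exact absurd ((Nat.pow_le_pow_iff_right hp.out.one_lt).mp this) (by omega)

end MaximalClass

/-- A finite `p`-group of maximal class (order `pⁿ`, nilpotency class `n − 1`) with an
abelian subgroup of index `p` has all of its non-abelian subgroups of maximal class. -/
theorem stmt17 {G : Type*} [Group G] [Finite G] (p n : ℕ) (hp : p.Prime)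
    (hcard : Nat.card G = p ^ n)
    (hmax : (⊤ : Subgroup G).lowerCentralSeries (n - 1) = ⊥ ∧ ∀ m < n - 1, (⊤ : Subgroup G).lowerCentralSeries m ≠ ⊥)
    (A : Subgroup G) (hA : IsMulCommutative ↥A) (hAi : A.index = p) :
    ∀ H : Subgroup G, ¬ IsMulCommutative ↥H → ∀ m : ℕ, Nat.card H = p ^ m →
      (⊤ : Subgroup ↥H).lowerCentralSeries (m - 1) = ⊥ ∧
      ∀ l < m - 1, (⊤ : Subgroup ↥H).lowerCentralSeries l ≠ ⊥ := by
  intro H hH m hm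
  have : Fact p.Prime := ⟨hp⟩
  have := (IsPGroup.of_card hcard).normal_of_index_eq hAi
  have hHA : ¬ H ≤ A := fun hle => hH <| le_centralizer_iff_isMulCommutative.mp <|
    hle.trans ((le_centralizer A).trans (centralizer_le hle))
  obtain ⟨h, hhH, hhA⟩ := SetLike.not_le_iff_exists.mp hHA
  have hm2 : 2 ≤ m := by
    rcases m with _ | _ | m
    · exact absurd ((card_eq_one.mp hm).symm ▸ bot_le) hHA
    · have := isCyclic_of_prime_card (hm.trans (pow_one p))
      exact absurd IsCyclic.isMulCommutative hH
    · omega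
  exact lowerCentralSeries_maximalClass_of_card_inf_centralizer_le hm hm2
    (B := A.subgroupOf H) (h := ⟨h, hhH⟩)
    (by rw [← relIndex, relIndex_eq_index_of_not_le (hAi ▸ hp) hHA, hAi])
    (by simpa [mem_subgroupOf] using hhA)
    ((card_subgroupOf_inf_centralizer_le A H _).trans
      (card_inf_centralizer_le_of_maximalClass hcard hmax.2 hAi hhA))
end
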